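/- arXiv:0804.1679 — 7 statements merged into one kernel-verified Lean document; each statement's English description precedes it below -/
import Mathlib

section
/- Let K be a field, x₁,…,xₙ algebraically independent over K, and f₁,…,f_m ∈ K(x₁,…,xₙ). If n is strictly greater than the transcendence degree of K(f₁,…,f_m) over K, then there exist infinitely many distinct intermediate fields F with K(f₁,…,f_m) ⊆ F ⊆ K(x₁,…,xₙ). -/
open IntermediateField Set

attribute [local instance] MvPolynomial.algebraMvPolynomial



section Aux
universe u
variable {F : Type*} {L : Type u} [Field F] [Field L] [Algebra F L]

theorem aux_mono {N₁ N₂ : IntermediateField F L} (h : N₁ ≤ N₂) {z : L}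
    (hz : IsAlgebraic N₁ z) : IsAlgebraic N₂ z :=
  IsAlgebraic.tower_top_of_subalgebra_le (A := N₁.toSubalgebra) (B := N₂.toSubalgebra) h hz

theorem aux_botEquiv (c : (⊥ : IntermediateField F L)) :
    algebraMap F L ((IntermediateField.botEquiv F L) c) = (c : L) := by
  obtain ⟨c', hc'⟩ := IntermediateField.mem_bot.1 c.2
  have h1 : c = algebraMap F (⊥ : IntermediateField F L) c' := by
    apply Subtype.ext; rw [← hc']; rfl
  rw [h1, AlgEquiv.commutes]
  simp only [Algebra.algebraMap_self, RingHom.id_apply]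
  rw [IsScalarTower.algebraMap_apply F (⊥ : IntermediateField F L) L c']
  rfl

theorem aux_isAlgebraic_bot {z : L} (hz : IsAlgebraic (⊥ : IntermediateField F L) z) :
    IsAlgebraic F z := by
  obtain ⟨p, hp, hpz⟩ := hz
  set φ : (⊥ : IntermediateField F L) →+* F := (IntermediateField.botEquiv F L).toAlgHom.toRingHom
  refine ⟨p.map φ, (Polynomial.map_ne_zero_iff φ.injective).mpr hp, ?_⟩
  rw [Polynomial.aeval_def, Polynomial.eval₂_map, ← hpz, Polynomial.aeval_def]
  congr 1
  ext c
  exact aux_botEquiv c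

theorem aux_indep_bot {ι : Type*} {v : ι → L} (hv : AlgebraicIndependent F v) :
    AlgebraicIndependent (⊥ : IntermediateField F L) v := by
  rw [algebraicIndependent_iff]
  intro p hp
  set φ : (⊥ : IntermediateField F L) →+* F := (IntermediateField.botEquiv F L).toAlgHom.toRingHom
  have h0 : MvPolynomial.aeval v (MvPolynomial.map φ p) = 0 := by
    rw [MvPolynomial.aeval_def, MvPolynomial.eval₂_map, ← hp, MvPolynomial.aeval_def]
    congr 1
    ext c
    exact aux_botEquiv c
  have := hv.eq_zero_of_aeval_eq_zero _ h0
  exact MvPolynomial.map_injective φ φ.injective (by simpa using this)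

end Aux




section Aux
variable {F : Type*} {L : Type u} [Field F] [Field L] [Algebra F L]

theorem aux_aeval_mem (S : Set L) (r : MvPolynomial S F) :
    MvPolynomial.aeval (Subtype.val : S → L) r ∈ Algebra.adjoin F S := by
  have h1 : Algebra.adjoin F S = Algebra.adjoin F (range (Subtype.val : S → L)) := by
    rw [Subtype.range_coe]
  rw [h1, Algebra.adjoin_range_eq_range_aeval]
  exact ⟨r, rfl⟩

theorem aux_isFractionRing (S : Set L) :
    letI : Algebra (Algebra.adjoin F S) (IntermediateField.adjoin F S) :=
      (Subalgebra.inclusion (IntermediateField.algebra_adjoin_le_adjoin F S)).toAlgebra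
    IsFractionRing (Algebra.adjoin F S) (IntermediateField.adjoin F S) := by
  letI : Algebra (Algebra.adjoin F S) (IntermediateField.adjoin F S) :=
    (Subalgebra.inclusion (IntermediateField.algebra_adjoin_le_adjoin F S)).toAlgebra
  have hinj : Function.Injective (algebraMap (Algebra.adjoin F S) (IntermediateField.adjoin F S)) :=
    fun a b h => Subtype.ext (congrArg Subtype.val h : _)
  constructor
  constructor
  · rintro ⟨y, hy⟩
    have hy0 : y ≠ 0 := nonZeroDivisors.ne_zero hy
    rw [isUnit_iff_ne_zero]
    intro h
    exact hy0 (hinj (by rw [h]; simp))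
  · rintro ⟨x, hx⟩
    rw [IntermediateField.mem_adjoin_iff] at hx
    obtain ⟨r, s, hrs⟩ := hx
    by_cases hs0 : MvPolynomial.aeval (Subtype.val : S → L) s = 0
    · refine ⟨⟨0, 1⟩, ?_⟩
      apply Subtype.ext
      show x * _ = _
      rw [hrs, hs0, div_zero, zero_mul]
      simp
    · refine ⟨⟨⟨_, aux_aeval_mem S r⟩, ⟨⟨_, aux_aeval_mem S s⟩, mem_nonZeroDivisors_of_ne_zero
        (fun h => hs0 (by simpa using congrArg Subtype.val h))⟩⟩, ?_⟩
      apply Subtype.ext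
      show x * _ = _
      rw [hrs]
      exact div_mul_cancel₀ _ hs0
  · intro a b h
    exact ⟨1, by simpa using hinj h⟩

theorem aux_bridge (S : Set L) (z : L) :
    IsAlgebraic (IntermediateField.adjoin F S) z ↔ IsAlgebraic (Algebra.adjoin F S) z := by
  letI : Algebra (Algebra.adjoin F S) (IntermediateField.adjoin F S) :=
    (Subalgebra.inclusion (IntermediateField.algebra_adjoin_le_adjoin F S)).toAlgebra
  haveI : IsScalarTower (Algebra.adjoin F S) (IntermediateField.adjoin F S) L :=
    IsScalarTower.of_algebraMap_eq (fun x => rfl)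
  haveI : IsFractionRing (Algebra.adjoin F S) (IntermediateField.adjoin F S) :=
    aux_isFractionRing S
  exact (IsFractionRing.isAlgebraic_iff (Algebra.adjoin F S) (IntermediateField.adjoin F S) L).symm

theorem aux_frac_indep (S : Set L) {ι : Type*} {w : ι → L}
    (h : AlgebraicIndependent (Algebra.adjoin F S) w) :
    AlgebraicIndependent (IntermediateField.adjoin F S) w := by
  letI : Algebra (Algebra.adjoin F S) (IntermediateField.adjoin F S) :=
    (Subalgebra.inclusion (IntermediateField.algebra_adjoin_le_adjoin F S)).toAlgebra
  haveI : IsScalarTower (Algebra.adjoin F S) (IntermediateField.adjoin F S) L :=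
    IsScalarTower.of_algebraMap_eq (fun x => rfl)
  haveI : IsFractionRing (Algebra.adjoin F S) (IntermediateField.adjoin F S) :=
    aux_isFractionRing S
  have hmapinj : Function.Injective
      (algebraMap (Algebra.adjoin F S) (IntermediateField.adjoin F S)) :=
    fun a b hab => Subtype.ext (congrArg Subtype.val hab : _)
  rw [algebraicIndependent_iff]
  intro p hp
  obtain ⟨⟨q, d⟩, hqd⟩ := IsLocalization.surj
    (Submonoid.map (MvPolynomial.C (σ := ι)) (nonZeroDivisors (Algebra.adjoin F S))) p
  obtain ⟨d₀, hd₀, hCd₀⟩ := d.2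
  have halg : algebraMap (MvPolynomial ι (Algebra.adjoin F S))
        (MvPolynomial ι (IntermediateField.adjoin F S))
      = MvPolynomial.map (algebraMap _ _) := MvPolynomial.algebraMap_def
  have h0 : MvPolynomial.aeval w q = 0 := by
    have happ : MvPolynomial.aeval w (algebraMap (MvPolynomial ι (Algebra.adjoin F S))
        (MvPolynomial ι (IntermediateField.adjoin F S)) q) = MvPolynomial.aeval w q := by
      rw [halg, MvPolynomial.aeval_map_algebraMap]
    rw [← happ, ← hqd, map_mul, hp, zero_mul]
  have hq0 : q = 0 := h.eq_zero_of_aeval_eq_zero _ h0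
  rw [hq0, map_zero] at hqd
  have hd0 : ((d : MvPolynomial ι (Algebra.adjoin F S))) ≠ 0 := by
    rw [← hCd₀]
    have hne : d₀ ≠ 0 := nonZeroDivisors.ne_zero hd₀
    simpa using fun hh => hne hh
  have hne2 : algebraMap (MvPolynomial ι (Algebra.adjoin F S))
      (MvPolynomial ι (IntermediateField.adjoin F S)) (d : MvPolynomial ι (Algebra.adjoin F S)) ≠ 0 := by
    rw [halg]
    intro hh
    exact hd0 (MvPolynomial.map_injective _ hmapinj (by simpa using hh))
  rcases mul_eq_zero.1 hqd with h1 | h1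
  · exact h1
  · exact absurd h1 hne2

end Aux


section Aux
variable {F : Type*} {L : Type u} [Field F] [Field L] [Algebra F L]

-- S3: tail independence over adjoined ring
theorem aux_adjoin_indep {ι : Type*} {z : L} {v : ι → L}
    (h : AlgebraicIndependent F (fun o : Option ι => o.elim z v)) :
    AlgebraicIndependent (Algebra.adjoin F ({z} : Set L)) v := by
  classical
  have hzs : AlgebraicIndependent F (fun _ : Unit => z) := by
    have := h.comp (fun _ : Unit => none) (fun a b _ => rfl)
    exact this
  let e : MvPolynomial Unit F ≃ₐ[F] Algebra.adjoin F ({z} : Set L) :=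
    hzs.aevalEquiv.trans (Subalgebra.equivOfEq _ _ (by rw [Set.range_const]))
  have he : ∀ q : MvPolynomial Unit F,
      algebraMap (Algebra.adjoin F ({z} : Set L)) L (e q) = MvPolynomial.aeval (fun _ : Unit => z) q :=
    fun q => rfl
  let Ψ : MvPolynomial ι (MvPolynomial Unit F) ≃ₐ[F] MvPolynomial ι (Algebra.adjoin F ({z} : Set L)) :=
    MvPolynomial.mapAlgEquiv ι e
  let Φ : MvPolynomial (ι ⊕ Unit) F ≃ₐ[F] MvPolynomial ι (MvPolynomial Unit F) :=
    MvPolynomial.sumAlgEquiv F ι Unit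
  -- independence of the sum family
  let e₃ : (ι ⊕ Unit) ≃ Option ι :=
    { toFun := Sum.elim some (fun _ => none)
      invFun := fun o => o.elim (.inr ()) .inl
      left_inv := by rintro (i | ⟨⟩) <;> rfl
      right_inv := by rintro (_ | i) <;> rfl }
  have hsum : AlgebraicIndependent F (Sum.elim v (fun _ : Unit => z)) := by
    refine (algebraicIndependent_equiv' e₃ ?_).mpr h
    funext s; cases s <;> rfl
  -- commutation
  have hcomm : ∀ r : MvPolynomial (ι ⊕ Unit) F,
      MvPolynomial.aeval v (Ψ (Φ r)) = MvPolynomial.aeval (Sum.elim v (fun _ : Unit => z)) r := by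
    intro r
    have : ((MvPolynomial.aeval v : MvPolynomial ι (Algebra.adjoin F ({z} : Set L)) →ₐ[_] L).toRingHom.comp
        ((Ψ.toAlgHom.toRingHom).comp Φ.toAlgHom.toRingHom)) =
        (MvPolynomial.aeval (Sum.elim v (fun _ : Unit => z)) :
          MvPolynomial (ι ⊕ Unit) F →ₐ[F] L).toRingHom := by
      apply MvPolynomial.ringHom_ext
      · intro c
        simp only [RingHom.coe_comp, Function.comp_apply, AlgHom.toRingHom_eq_coe,
          RingHom.coe_coe]
        show MvPolynomial.aeval v (Ψ (Φ (MvPolynomial.C c))) = _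
        have h1 : Φ (MvPolynomial.C c) = MvPolynomial.C (MvPolynomial.C c) := by
          exact MvPolynomial.sumAlgEquiv_C_inl (R := F) (S₁ := ι) (S₂ := Unit) c
        rw [h1]
        have h2 : Ψ (MvPolynomial.C (MvPolynomial.C c)) = MvPolynomial.C (e (MvPolynomial.C c)) := by
          simp [Ψ]
        rw [h2, MvPolynomial.aeval_C, he, MvPolynomial.aeval_C]
        exact (MvPolynomial.aeval_C _ _).symm
      · rintro (i | u)
        · simp only [RingHom.coe_comp, Function.comp_apply, AlgHom.toRingHom_eq_coe,
            RingHom.coe_coe]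
          show MvPolynomial.aeval v (Ψ (Φ (MvPolynomial.X (Sum.inl i)))) = _
          have h1 : Φ (MvPolynomial.X (Sum.inl i) : MvPolynomial (ι ⊕ Unit) F) = MvPolynomial.X i := by
            exact MvPolynomial.sumAlgEquiv_X_inl (R := F) (S₁ := ι) (S₂ := Unit) i
          rw [h1]
          have h2 : Ψ (MvPolynomial.X i : MvPolynomial ι (MvPolynomial Unit F)) = MvPolynomial.X i := by
            simp [Ψ]
          rw [h2]
          simp
        · simp only [RingHom.coe_comp, Function.comp_apply, AlgHom.toRingHom_eq_coe,
            RingHom.coe_coe]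
          show MvPolynomial.aeval v (Ψ (Φ (MvPolynomial.X (Sum.inr u)))) = _
          have h1 : Φ (MvPolynomial.X (Sum.inr u) : MvPolynomial (ι ⊕ Unit) F)
              = MvPolynomial.C (MvPolynomial.X u) := by
            exact MvPolynomial.sumAlgEquiv_X_inr (R := F) (S₁ := ι) (S₂ := Unit) u
          rw [h1]
          have h2 : Ψ (MvPolynomial.C (MvPolynomial.X u)) = MvPolynomial.C (e (MvPolynomial.X u)) := by
            simp [Ψ]
          rw [h2, MvPolynomial.aeval_C, he, MvPolynomial.aeval_X]
          simp
    exact congrFun (congrArg (fun (f : _ →+* L) => (f : _ → L)) this) r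
  rw [algebraicIndependent_iff]
  intro p hp
  have h1 : MvPolynomial.aeval (Sum.elim v (fun _ : Unit => z)) (Φ.symm (Ψ.symm p)) = 0 := by
    rw [← hcomm (Φ.symm (Ψ.symm p))]
    simp [hp]
  have h2 := hsum.eq_zero_of_aeval_eq_zero _ h1
  have : Ψ (Φ (Φ.symm (Ψ.symm p))) = Ψ (Φ 0) := by rw [h2]
  simpa using this

end Aux


section Aux
variable {F : Type*} {L : Type u} [Field F] [Field L] [Algebra F L]



-- L2 : exchange for one element
theorem aux_swap {u z : L} (hz : Transcendental F z)
    (halg : IsAlgebraic (IntermediateField.adjoin F ({u} : Set L)) z) :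
    IsAlgebraic (IntermediateField.adjoin F ({z} : Set L)) u := by
  by_contra hcon
  have hu : Transcendental F u := by
    intro h
    exact hcon (IsAlgebraic.tower_top (L := IntermediateField.adjoin F ({z} : Set L)) h)
  have hzu : Transcendental (Algebra.adjoin F ({z} : Set L)) u := by
    intro h
    exact hcon ((aux_bridge {z} u).mpr h)
  have hz1 : AlgebraicIndependent F (fun _ : Unit => z) :=
    (algebraicIndependent_unique_type_iff).mpr hz
  have hu1 : AlgebraicIndependent F (fun _ : Unit => u) :=
    (algebraicIndependent_unique_type_iff).mpr hu
  have hpair : AlgebraicIndependent F (fun o : Option Unit => o.elim u fun _ => z) := by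
    refine (hz1.option_iff_transcendental u).mpr ?_
    have : Set.range (fun _ : Unit => z) = ({z} : Set L) := Set.range_const
    rw [this]
    exact hzu
  have hpair' : AlgebraicIndependent F (fun o : Option Unit => o.elim z fun _ => u) := by
    let e₄ : Option Unit ≃ Option Unit :=
      { toFun := fun o => o.elim (some ()) (fun _ => none)
        invFun := fun o => o.elim (some ()) (fun _ => none)
        left_inv := by rintro (_ | ⟨⟩) <;> rfl
        right_inv := by rintro (_ | ⟨⟩) <;> rfl }
    have hswap : (fun o : Option Unit => o.elim u fun _ => z) ∘ e₄ =
        (fun o : Option Unit => o.elim z fun _ => u) := by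
      funext o
      rcases o with _ | ⟨⟩ <;> rfl
    exact (algebraicIndependent_equiv' e₄ hswap).mpr hpair
  have : Transcendental (Algebra.adjoin F (Set.range (fun _ : Unit => u))) z :=
    (hu1.option_iff_transcendental z).mp hpair'
  rw [Set.range_const] at this
  exact this ((aux_bridge {u} z).mp halg)

-- tower step
theorem aux_step (M : IntermediateField F L) (S : Set L)
    (hS : ∀ x ∈ S, IsAlgebraic M x)
    (hL : Algebra.IsAlgebraic (IntermediateField.adjoin F S) L) :
    Algebra.IsAlgebraic M L := by
  set A₂ : IntermediateField M L := IntermediateField.adjoin M S with hA₂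
  haveI h1 : Algebra.IsAlgebraic M A₂ :=
    IntermediateField.isAlgebraic_adjoin (fun x hx => (hS x hx).isIntegral)
  haveI h2 : Algebra.IsAlgebraic A₂ L := by
    constructor
    intro z
    have hz := hL.isAlgebraic z
    have hle : IntermediateField.adjoin F S ≤ A₂.restrictScalars F := by
      rw [IntermediateField.adjoin_le_iff]
      intro x hx
      exact IntermediateField.subset_adjoin M S hx
    exact aux_mono hle hz
  exact Algebra.IsAlgebraic.trans M A₂ L

-- power lemma
theorem aux_pow_notmem {t : L} (ht : Transcendental F t) {N : ℕ} (hN : 2 ≤ N) :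
    t ∉ IntermediateField.adjoin F ({t ^ N} : Set L) := by
  intro hmem
  rw [IntermediateField.mem_adjoin_simple_iff] at hmem
  obtain ⟨r, s, hrs⟩ := hmem
  have hN0 : 0 < N := by omega
  have hexp : ∀ p : Polynomial F, Polynomial.aeval (t ^ N) p
      = Polynomial.aeval t (Polynomial.expand F N p) := by
    intro p
    rw [Polynomial.expand_aeval]
  by_cases hden : Polynomial.aeval t (Polynomial.expand F N s) = 0
  · rw [hexp, hexp, hden, div_zero] at hrs
    exact ht (hrs ▸ isAlgebraic_zero)
  · rw [hexp, hexp] at hrs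
    have hmul : t * Polynomial.aeval t (Polynomial.expand F N s)
        = Polynomial.aeval t (Polynomial.expand F N r) := by
      exact ((div_eq_iff hden).mp hrs.symm).symm
    have heq : Polynomial.X * Polynomial.expand F N s = Polynomial.expand F N r := by
      have hinj : Function.Injective (Polynomial.aeval t : Polynomial F →ₐ[F] L) := by
        rwa [← transcendental_iff_injective]
      apply hinj
      rw [map_mul, Polynomial.aeval_X]
      exact hmul
    have hs0 : s = 0 := by
      ext i
      have hc := congrArg (fun p => Polynomial.coeff p (N * i + 1)) heq
      rw [Polynomial.coeff_X_mul, Polynomial.coeff_expand hN0, Polynomial.coeff_expand hN0] at hc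
      rw [if_pos (dvd_mul_right N i), Nat.mul_div_cancel_left i hN0] at hc
      rw [if_neg (by
        intro hdvd
        have h1 : N ∣ 1 := (Nat.dvd_add_right (dvd_mul_right N i)).mp hdvd
        have := Nat.dvd_one.mp h1
        omega)] at hc
      rw [hc]
      simp
    rw [hs0] at hden
    simp at hden

end Aux


section EX
variable {F : Type*} {L : Type u} [Field F] [Field L] [Algebra F L]







theorem aux_EX : ∀ (k : ℕ) (F L : Type u) [Field F] [Field L] [Algebra F L] (t : Fin k → L),
    Algebra.IsAlgebraic (IntermediateField.adjoin F (Set.range t)) L →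
    ∀ y : Fin (k+1) → L, ¬ AlgebraicIndependent F y := by
  intro k
  induction k with
  | zero =>
    intro F L _ _ _ t ht y hy
    have h0 : Set.range t = (∅ : Set L) := by
      simp
    rw [h0, IntermediateField.adjoin_empty] at ht
    exact hy.transcendental 0 (aux_isAlgebraic_bot (ht.isAlgebraic (y 0)))
  | succ k IH =>
    intro F L _ _ _ t ht y hy
    classical
    have hy0 : Transcendental F (y 0) := hy.transcendental 0
    set P : Finset (Fin (k+1)) → Prop := fun J =>
      IsAlgebraic (IntermediateField.adjoin F (t '' ↑J)) (y 0) with hP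
    have hPuniv : P Finset.univ := by
      have h1 := ht.isAlgebraic (y 0)
      have h2 : (t '' ↑(Finset.univ : Finset (Fin (k+1))) : Set L) = Set.range t := by
        rw [Finset.coe_univ, Set.image_univ]
      show IsAlgebraic (IntermediateField.adjoin F
        (t '' ↑(Finset.univ : Finset (Fin (k+1))))) (y 0)
      rw [h2]
      exact h1
    have hex : ∃ m : ℕ, ∃ J : Finset (Fin (k+1)), J.card = m ∧ P J :=
      ⟨_, Finset.univ, rfl, hPuniv⟩
    obtain ⟨J, hJcard, hJP⟩ := Nat.find_spec hex
    have hmin : ∀ J' : Finset (Fin (k+1)), J'.card < Nat.find hex → ¬ P J' := by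
      intro J' hlt hP'
      exact Nat.find_min hex hlt ⟨J', rfl, hP'⟩
    have hJne : J.Nonempty := by
      rcases Finset.eq_empty_or_nonempty J with h | h
      · exfalso
        rw [h] at hJP
        rw [hP] at hJP
        have : IsAlgebraic (IntermediateField.adjoin F (∅ : Set L)) (y 0) := by
          have h3 : (t '' ↑(∅ : Finset (Fin (k+1))) : Set L) = (∅ : Set L) := by simp
          rw [← h3]
          exact hJP
        rw [IntermediateField.adjoin_empty] at this
        exact hy0 (aux_isAlgebraic_bot this)
      · exact h
    obtain ⟨i, hiJ⟩ := hJne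
    set F₁ := IntermediateField.adjoin F (t '' ↑(J.erase i)) with hF₁
    have hJdecomp : (t '' ↑J : Set L) = t '' ↑(J.erase i) ∪ {t i} := by
      rw [Set.union_singleton, ← Set.image_insert_eq, ← Finset.coe_insert,
        Finset.insert_erase hiJ]
    have hclaim1 : IsAlgebraic (IntermediateField.adjoin F₁ ({t i} : Set L)) (y 0) := by
      have h1 : IsAlgebraic
          ((IntermediateField.adjoin F₁ ({t i} : Set L)).restrictScalars F) (y 0) := by
        rw [hF₁, IntermediateField.adjoin_adjoin_left, ← hJdecomp]
        exact hJP
      exact h1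
    have hclaim2 : Transcendental F₁ (y 0) := by
      apply hmin
      rw [Finset.card_erase_of_mem hiJ, hJcard]
      have : 0 < Nat.find hex := by
        rw [← hJcard]
        exact Finset.card_pos.mpr ⟨i, hiJ⟩
      omega
    have hswap := aux_swap hclaim2 hclaim1
    have hualg : IsAlgebraic
        (IntermediateField.adjoin F (t '' ↑(J.erase i) ∪ {y 0})) (t i) := by
      rw [← IntermediateField.adjoin_adjoin_left]
      exact hswap
    set F' := IntermediateField.adjoin F ({y 0} : Set L) with hF'
    set t'' : Fin k → L := fun j => t (i.succAbove j) with ht''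
    set M := IntermediateField.adjoin F (({y 0} : Set L) ∪ Set.range t'') with hM
    have hMeq : (IntermediateField.adjoin F' (Set.range t'')).restrictScalars F = M :=
      IntermediateField.adjoin_adjoin_left F _ _
    have huM : IsAlgebraic M (t i) := by
      refine aux_mono (IntermediateField.adjoin.mono _ _ _ ?_) hualg
      rintro x (⟨j, hj, rfl⟩ | hx)
      · rcases Fin.exists_succAbove_eq (show (j : Fin (k+1)) ≠ i from
          (Finset.mem_erase.mp (by exact_mod_cast hj)).1) with ⟨q, hq⟩
        exact Or.inr ⟨q, congrArg t hq⟩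
      · exact Or.inl hx
    have htM : ∀ x ∈ Set.range t, IsAlgebraic M x := by
      rintro x ⟨j, rfl⟩
      by_cases hji : j = i
      · rwa [hji]
      · have hmem : t j ∈ M := by
          apply IntermediateField.subset_adjoin
          rcases Fin.exists_succAbove_eq hji with ⟨q, hq⟩
          exact Or.inr ⟨q, congrArg t hq⟩
        exact isAlgebraic_algebraMap (⟨t j, hmem⟩ : M)
    have hMalg : Algebra.IsAlgebraic M L := aux_step M (Set.range t) htM ht
    have hM'alg : Algebra.IsAlgebraic (IntermediateField.adjoin F' (Set.range t'')) L := by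
      constructor
      intro z
      have h1 := hMalg.isAlgebraic z
      rw [← hMeq] at h1
      exact h1
    have htail : AlgebraicIndependent F' (fun j : Fin (k+1) => y j.succ) := by
      apply aux_frac_indep
      apply aux_adjoin_indep
      have he : y ∘ ((finSuccEquiv (k+1)).symm) =
          (fun o : Option (Fin (k+1)) => o.elim (y 0) (fun j => y j.succ)) := by
        funext o
        rcases o with _ | j
        · simp
        · simp
      exact he ▸ (algebraicIndependent_equiv (finSuccEquiv (k+1)).symm).mpr hy
    exact IH F' L t'' hM'alg _ htail

end EX







theorem aux_map_alg {K E₂ : Type*} {L : Type*} [Field K] [Field E₂] [Field L]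
    [Algebra K E₂] [Algebra K L] (f : E₂ →ₐ[K] L) (N : IntermediateField K E₂) {zz : E₂}
    (h : IsAlgebraic N zz) : IsAlgebraic (N.map f) (f zz) := by
  obtain ⟨p, hp, hpz⟩ := h
  let g : N →+* (N.map f) := RingHom.mk' ⟨⟨fun c => ⟨f c, ⟨c, c.2, rfl⟩⟩,
    by apply Subtype.ext; simp⟩,
    fun a b => by apply Subtype.ext; simp⟩
    (fun a b => by apply Subtype.ext; simp)
  have hginj : Function.Injective g := fun a b hab =>
    Subtype.ext (f.injective (congrArg Subtype.val hab : _))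
  refine ⟨p.map g, (Polynomial.map_ne_zero_iff hginj).mpr hp, ?_⟩
  rw [Polynomial.aeval_def, Polynomial.eval₂_map]
  have hcomp : (algebraMap (N.map f) L).comp g = (f : E₂ →+* L).comp (algebraMap N E₂) := by
    ext c; rfl
  rw [hcomp]
  have hfz : (f zz) = (f : E₂ →+* L) zz := rfl
  rw [hfz, ← Polynomial.hom_eval₂]
  rw [Polynomial.aeval_def] at hpz
  rw [hpz, map_zero]


/-- If `n` is strictly greater than the transcendence degree of `K(f₁,…,f_m)` over `K`,
then there are infinitely many intermediate fields between `K(f₁,…,f_m)` and `K(x₁,…,xₙ)`. -/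
theorem stmt_0 (K : Type*) [Field K] (n m : ℕ)
    (f : Fin m → FractionRing (MvPolynomial (Fin n) K))
    (E : IntermediateField K (FractionRing (MvPolynomial (Fin n) K)))
    (hE : E = IntermediateField.adjoin K (Set.range f))
    (s : Set E) (hs : IsTranscendenceBasis K ((↑) : s → E))
    (hlt : Cardinal.mk s < n) :
    {F : IntermediateField K (FractionRing (MvPolynomial (Fin n) K)) | E ≤ F}.Infinite := by
  classical
  set L := FractionRing (MvPolynomial (Fin n) K) with hL
  -- Part I : find transcendental element over E
  obtain ⟨T, hT⟩ : ∃ T : L, Transcendental E T := by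
    by_contra hcon
    have hallalg : ∀ zz : L, IsAlgebraic E zz := fun zz =>
      not_not.mp (fun h => hcon ⟨zz, h⟩)
    haveI hEL : Algebra.IsAlgebraic E L := ⟨hallalg⟩
    -- s is finite
    have hfin : s.Finite := by
      rw [← Cardinal.lt_aleph0_iff_set_finite]
      exact hlt.trans (Cardinal.nat_lt_aleph0 n)
    haveI hfty : Fintype s := hfin.fintype
    set k := Fintype.card s with hk
    have hkn : k < n := by
      have h1 : (Cardinal.mk s) = (k : Cardinal) := Cardinal.mk_fintype s
      rw [h1] at hlt
      exact_mod_cast hlt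
    -- the independent family
    set φ : MvPolynomial (Fin n) K →ₐ[K] L := IsScalarTower.toAlgHom K _ L with hφ
    have hx : AlgebraicIndependent K (φ ∘ MvPolynomial.X) :=
      (MvPolynomial.algebraicIndependent_X (Fin n) K).map'
        (IsFractionRing.injective (MvPolynomial (Fin n) K) L)
    set x : Fin n → L := φ ∘ MvPolynomial.X with hxdef
    -- the generators
    set w : s → L := fun a => ((a : E) : L) with hw
    set e : Fin k ≃ s := (Fintype.equivFin s).symm with he
    set t : Fin k → L := w ∘ e with htdef
    have hrange : Set.range t = Set.range w := Function.Surjective.range_comp e.surjective w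
    set M := IntermediateField.adjoin K (Set.range t) with hM
    -- M-algebraicity of elements of E
    have hMsets : (IntermediateField.adjoin K
        (Set.range ((↑) : s → E))).map E.val = M := by
      rw [IntermediateField.adjoin_map, hM, hrange]
      congr 1
      rw [← Set.range_comp]
      rfl
    have hS : ∀ zz ∈ (E : Set L), IsAlgebraic M zz := by
      intro zz hzz
      have h1 := hs.isAlgebraic_field.isAlgebraic (⟨zz, hzz⟩ : E)
      have h2 := aux_map_alg E.val _ h1
      rw [hMsets] at h2
      exact h2
    have hMalg : Algebra.IsAlgebraic M L := by
      refine aux_step M (E : Set L) hS ?_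
      rw [IntermediateField.adjoin_self]
      exact hEL
    -- contradiction via exchange
    have hkn1 : k + 1 ≤ n := hkn
    exact aux_EX k K L t hMalg (x ∘ Fin.castLE hkn1)
      (hx.comp (Fin.castLE hkn1) (Fin.castLE_injective hkn1))
  -- Part II : build infinitely many intermediate fields
  have hT2 : ∀ j : ℕ, Transcendental E (T ^ (2 ^ j)) := fun j =>
    hT.pow (Nat.pow_pos (n := j) (by norm_num))
  -- the chain of fields
  set G : ℕ → IntermediateField K L :=
    fun j => (IntermediateField.adjoin E ({T ^ (2 ^ j)} : Set L)).restrictScalars K with hG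
  have hGmem : ∀ j, E ≤ G j := by
    intro j x hx
    exact IntermediateField.algebraMap_mem (IntermediateField.adjoin E ({T ^ (2 ^ j)} : Set L))
      (⟨x, hx⟩ : E)
  have hGnotmem : ∀ j j' : ℕ, j < j' → T ^ (2 ^ j) ∉ G j' := by
    intro j j' hjj' hmem
    have h1 : (T ^ (2 ^ j)) ^ (2 ^ (j' - j)) = T ^ (2 ^ j') := by
      rw [← pow_mul, ← pow_add, Nat.add_sub_cancel' (le_of_lt hjj')]
    refine aux_pow_notmem (F := E) (hT2 j) (N := 2 ^ (j' - j)) ?_ ?_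
    · have : 1 ≤ j' - j := by omega
      calc (2 : ℕ) = 2 ^ 1 := by norm_num
      _ ≤ 2 ^ (j' - j) := Nat.pow_le_pow_right (by norm_num) this
    · rw [h1]
      exact hmem
  have hGinj : Function.Injective G := by
    intro j j' hjj'
    by_contra hne
    rcases Nat.lt_or_ge j j' with h | h
    · exact hGnotmem j j' h (hjj' ▸ IntermediateField.subset_adjoin E _ rfl)
    · have h2 : j' < j := by omega
      exact hGnotmem j' j h2 (hjj' ▸ IntermediateField.subset_adjoin E _ rfl)
  exact Set.infinite_of_injective_forall_mem hGinj hGmem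
end

section
/- Let K be a field, x₁,…,xₙ algebraically independent over K, f₁,…,f_m ∈ K(x₁,…,xₙ), and suppose x₁ is transcendental over K(f₁,…,f_m). If i and j are positive integers with i properly dividing j, then K(f₁,…,f_m, x₁^j) is a proper subfield of K(f₁,…,f_m, x₁^i). -/
/-- If `x₁` is transcendental over `K(f₁,…,f_m)` and `i` properly divides `j`, then
`K(f₁,…,f_m, x₁ʲ)` is a proper subfield of `K(f₁,…,f_m, x₁ⁱ)`. -/
theorem stmt_1 (K : Type*) [Field K] (n m : ℕ)
    (f : Fin m → FractionRing (MvPolynomial (Fin n) K))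
    (v : Fin n) (x1 : FractionRing (MvPolynomial (Fin n) K))
    (hx1 : x1 = algebraMap (MvPolynomial (Fin n) K) _ (MvPolynomial.X v))
    (htrans : Transcendental (IntermediateField.adjoin K (Set.range f)) x1)
    (i j : ℕ) (hi : 0 < i) (hj : 0 < j) (hdvd : i ∣ j) (hne : i ≠ j) :
    IntermediateField.adjoin K (insert (x1 ^ j) (Set.range f)) <
      IntermediateField.adjoin K (insert (x1 ^ i) (Set.range f)) := by
  set S := Set.range f with hS
  set L := IntermediateField.adjoin K S with hL
  obtain ⟨k, rfl⟩ := hdvd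
  have hk0 : k ≠ 0 := by rintro rfl; simp at hj
  have hk1 : k ≠ 1 := by rintro rfl; simp at hne
  have hk2 : 2 ≤ k := by omega
  set t := x1 ^ i with htdef
  have ht : Transcendental L t := htrans.pow hi
  have htj : x1 ^ (i * k) = t ^ k := by rw [htdef, ← pow_mul]
  have hle : IntermediateField.adjoin K (insert (x1 ^ (i * k)) S) ≤
      IntermediateField.adjoin K (insert (x1 ^ i) S) := by
    apply IntermediateField.adjoin_le_iff.2
    rintro y (rfl | hy)
    · rw [htj]
      exact pow_mem (IntermediateField.subset_adjoin _ _ (Set.mem_insert _ _)) k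
    · exact IntermediateField.subset_adjoin _ _ (Set.mem_insert_of_mem _ hy)
  refine lt_of_le_of_ne hle (fun heq => ?_)
  have hmem : t ∈ IntermediateField.adjoin K (insert (x1 ^ (i * k)) S) := by
    rw [heq]; exact IntermediateField.subset_adjoin _ _ (Set.mem_insert _ _)
  rw [← Set.union_singleton, ← IntermediateField.adjoin_adjoin_left] at hmem
  rw [IntermediateField.mem_restrictScalars, IntermediateField.mem_adjoin_simple_iff] at hmem
  obtain ⟨r, s, hrs⟩ := hmem
  rw [htj] at hrs
  have htne : t ≠ 0 := fun h => ht (h ▸ isAlgebraic_zero)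
  have hs0 : Polynomial.aeval (t ^ k) s ≠ 0 := by
    intro h; rw [h, div_zero] at hrs; exact htne hrs
  have hmul : t * Polynomial.aeval (t ^ k) s = Polynomial.aeval (t ^ k) r := by
    field_simp at hrs; linear_combination hrs
  rw [← Polynomial.expand_aeval, ← Polynomial.expand_aeval] at hmul
  have hX : (Polynomial.X : Polynomial L) * Polynomial.expand L k s =
      Polynomial.expand L k r := by
    apply transcendental_iff_injective.mp ht
    simpa using hmul
  have hsne : s ≠ 0 := fun h => hs0 (by simp [h])
  have hes : Polynomial.expand L k s ≠ 0 := by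
    rwa [Ne, Polynomial.expand_eq_zero (by omega)]
  have hdeg := congrArg Polynomial.natDegree hX
  rw [Polynomial.natDegree_mul Polynomial.X_ne_zero hes, Polynomial.natDegree_X,
    Polynomial.natDegree_expand, Polynomial.natDegree_expand] at hdeg
  have hd1 : k ∣ 1 := by
    have := Nat.dvd_sub (dvd_mul_left k r.natDegree) (dvd_mul_left k s.natDegree)
    rwa [show r.natDegree * k - s.natDegree * k = 1 by omega] at this
  exact absurd (Nat.le_of_dvd one_pos hd1) (by omega)
end

section
/- Let K be a field, x₁,…,xₙ algebraically independent over K, and let F be an intermediate field with K ⊊ F ⊆ K(x₁,…,xₙ). If F is separable over K with transcendence degree d over K, then F can be generated over K by at most d+1 elements. -/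
open Polynomial in
theorem aux_irred_map {L A : Type*} [Field L] [CommRing A] [IsDomain A] [Algebra L A]
    (ψ : A →ₐ[L] L) {p : L[X]} (hmo : p.Monic) (hirr : Irreducible p) :
    Irreducible (p.map (algebraMap L A)) := by
  have hinj : Function.Injective (algebraMap L A) := (algebraMap L A).injective
  have hqmo : (p.map (algebraMap L A)).Monic := hmo.map _
  constructor
  · intro hu
    have := degree_eq_zero_of_isUnit hu
    rw [degree_map_eq_of_injective hinj] at this
    exact hirr.not_isUnit ((isUnit_iff_degree_eq_zero (p := p)).2 this)
  · intro f g hfg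
    have hlc : f.leadingCoeff * g.leadingCoeff = 1 := by
      have := hqmo
      rw [hfg, Monic, leadingCoeff_mul] at this
      exact this
    have huf : IsUnit f.leadingCoeff := IsUnit.of_mul_eq_one _ hlc
    have hug : IsUnit g.leadingCoeff := IsUnit.of_mul_eq_one _ (by rwa [mul_comm] at hlc)
    have hcomp : (ψ : A →+* L).comp (algebraMap L A) = RingHom.id L := by
      ext c; simp
    have hp' : p = (f.map (ψ : A →+* L)) * (g.map (ψ : A →+* L)) := by
      have := congrArg (Polynomial.map (ψ : A →+* L)) hfg
      rwa [map_map, hcomp, Polynomial.map_id, Polynomial.map_mul] at this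
    have hdegf : (f.map (ψ : A →+* L)).degree = f.degree :=
      degree_map_eq_of_leadingCoeff_ne_zero _ (by
        simpa using (huf.map ψ).ne_zero)
    have hdegg : (g.map (ψ : A →+* L)).degree = g.degree :=
      degree_map_eq_of_leadingCoeff_ne_zero _ (by
        simpa using (hug.map ψ).ne_zero)
    rcases hirr.isUnit_or_isUnit hp' with h | h
    · left
      have hdeg0 : f.degree = 0 := by rw [← hdegf]; exact degree_eq_zero_of_isUnit h
      rw [eq_C_of_degree_le_zero hdeg0.le]
      refine isUnit_C.2 ?_
      have : f.leadingCoeff = f.coeff 0 := by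
        rw [Polynomial.leadingCoeff, Polynomial.natDegree_eq_of_degree_eq_some hdeg0]; rfl
      rwa [this] at huf
    · right
      have hdeg0 : g.degree = 0 := by rw [← hdegg]; exact degree_eq_zero_of_isUnit h
      rw [eq_C_of_degree_le_zero hdeg0.le]
      refine isUnit_C.2 ?_
      have : g.leadingCoeff = g.coeff 0 := by
        rw [Polynomial.leadingCoeff, Polynomial.natDegree_eq_of_degree_eq_some hdeg0]; rfl
      rwa [this] at hug

open Polynomial in
theorem aux_minpoly_map {L Ω : Type*} [Field L] [Field Ω] [Algebra L Ω] (σ : Type*)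
    {FR : Type*} [Field FR] [Algebra L FR] [Algebra FR Ω] [IsScalarTower L FR Ω]
    (e : FractionRing (MvPolynomial σ L) ≃ₐ[L] FR)
    {x : Ω} (hx : IsIntegral L x) :
    minpoly FR x = (minpoly L x).map (algebraMap L FR) := by
  set p := minpoly L x with hp
  have hmo : p.Monic := minpoly.monic hx
  have hirr : Irreducible p := minpoly.irreducible hx
  have h1 : Irreducible (p.map (algebraMap L (MvPolynomial σ L))) :=
    aux_irred_map (MvPolynomial.aeval 0) hmo hirr
  have h2 : Irreducible (p.map (algebraMap L (FractionRing (MvPolynomial σ L)))) := by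
    haveI : IsIntegrallyClosed (MvPolynomial σ L) := by
      set_option synthInstance.maxHeartbeats 1000000 in infer_instance
    have := ((hmo.map (algebraMap L (MvPolynomial σ L))).irreducible_iff_irreducible_map_fraction_map
      (K := FractionRing (MvPolynomial σ L))).1 h1
    rwa [map_map, ← IsScalarTower.algebraMap_eq] at this
  have h3 : Irreducible (p.map (algebraMap L FR)) := by
    have h4 := h2.map (M := (FractionRing (MvPolynomial σ L))[X]) (F := (FractionRing (MvPolynomial σ L))[X] ≃+* FR[X])
      (Polynomial.mapEquiv (e : FractionRing (MvPolynomial σ L) ≃+* FR))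
    have hcomp : ((e : FractionRing (MvPolynomial σ L) ≃+* FR) : FractionRing (MvPolynomial σ L) →+* FR).comp
        (algebraMap L (FractionRing (MvPolynomial σ L))) = algebraMap L FR := by
      ext c; simp
    rwa [Polynomial.mapEquiv_apply, map_map, hcomp] at h4
  refine (minpoly.eq_of_irreducible_of_monic h3 ?_ (hmo.map _)).symm
  rw [aeval_map_algebraMap]
  exact minpoly.aeval L x

theorem aux_gen (K : Type*) [Field K] (n : ℕ) (L0 : Type*) [Field L0] [Algebra K L0]
    [Algebra L0 (FractionRing (MvPolynomial (Fin n) K))]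
    [IsScalarTower K L0 (FractionRing (MvPolynomial (Fin n) K))] :
    IntermediateField.adjoin L0 (Set.range fun i : Fin n =>
      algebraMap (MvPolynomial (Fin n) K) (FractionRing (MvPolynomial (Fin n) K))
        (MvPolynomial.X i)) = ⊤ := by
  set FF := FractionRing (MvPolynomial (Fin n) K) with hFF
  set xi : Fin n → FF := fun i => algebraMap (MvPolynomial (Fin n) K) FF (MvPolynomial.X i) with hxi
  have hpoly : ∀ p : MvPolynomial (Fin n) K, algebraMap (MvPolynomial (Fin n) K) FF p ∈
      IntermediateField.adjoin L0 (Set.range xi) := by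
    intro p
    induction p using MvPolynomial.induction_on with
    | C a =>
        have h1 : algebraMap (MvPolynomial (Fin n) K) FF (MvPolynomial.C a)
            = algebraMap L0 FF (algebraMap K L0 a) := by
          rw [← IsScalarTower.algebraMap_apply K L0 FF,
            IsScalarTower.algebraMap_apply K (MvPolynomial (Fin n) K) FF,
            MvPolynomial.algebraMap_eq]
        rw [h1]
        exact (IntermediateField.adjoin L0 (Set.range xi)).algebraMap_mem _
    | add p q hp hq => rw [RingHom.map_add]; exact add_mem hp hq
    | mul_X p i hp =>
        rw [RingHom.map_mul]
        exact mul_mem hp (IntermediateField.subset_adjoin _ _ ⟨i, rfl⟩)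
  rw [eq_top_iff]
  intro z _
  obtain ⟨a, b, hb, rfl⟩ := IsFractionRing.div_surjective (A := MvPolynomial (Fin n) K) z
  exact div_mem (hpoly a) (hpoly b)

set_option maxHeartbeats 1000000 in
set_option synthInstance.maxHeartbeats 400000 in
/-- A separable intermediate field `K ⊊ F ⊆ K(x₁,…,xₙ)` of transcendence degree `d`
(witnessed by a separating transcendence basis `B` of cardinality `d`) can be generated
over `K` by at most `d + 1` elements. -/
theorem stmt_2 (K : Type*) [Field K] (n d : ℕ)
    (F : IntermediateField K (FractionRing (MvPolynomial (Fin n) K)))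
    (hF : ⊥ < F)
    (B : Finset (FractionRing (MvPolynomial (Fin n) K)))
    (hBF : (B : Set (FractionRing (MvPolynomial (Fin n) K))) ⊆ (F : Set (FractionRing (MvPolynomial (Fin n) K))))
    (hcard : B.card = d)
    (hindep : AlgebraicIndependent K (fun x : {y // y ∈ B} => (x : FractionRing (MvPolynomial (Fin n) K))))
    (hsep : ∀ x ∈ F, IsIntegral (IntermediateField.adjoin K (B : Set (FractionRing (MvPolynomial (Fin n) K)))) x ∧
      IsSeparable (IntermediateField.adjoin K (B : Set (FractionRing (MvPolynomial (Fin n) K)))) x) :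
    ∃ s : Finset (FractionRing (MvPolynomial (Fin n) K)),
      s.card ≤ d + 1 ∧ IntermediateField.adjoin K (s : Set (FractionRing (MvPolynomial (Fin n) K))) = F := by
  classical
  set L := IntermediateField.adjoin K (B : Set (FractionRing (MvPolynomial (Fin n) K))) with hLdef
  have hLF : L ≤ F := IntermediateField.adjoin_le_iff.2 hBF
  set xi : Fin n → FractionRing (MvPolynomial (Fin n) K) := fun i =>
    algebraMap (MvPolynomial (Fin n) K) (FractionRing (MvPolynomial (Fin n) K)) (MvPolynomial.X i)
    with hxidef
  -- maximal algebraically independent subset of the variables over L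
  obtain ⟨T, -, hTmax⟩ := exists_maximal_algebraicIndependent (∅ : Set (FractionRing (MvPolynomial (Fin n) K))) (Set.range xi)
    (Set.empty_subset _) (algebraicIndependent_empty (K := ↥L))
  have hT : AlgebraicIndependent ↥L ((↑) : T → (FractionRing (MvPolynomial (Fin n) K))) := hTmax.1.1
  have hTsub : T ⊆ Set.range xi := hTmax.1.2
  set M : IntermediateField ↥L (FractionRing (MvPolynomial (Fin n) K)) := IntermediateField.adjoin ↥L (Set.range ((↑) : T → (FractionRing (MvPolynomial (Fin n) K))))
    with hMdef
  have hST : Set.range ((↑) : T → (FractionRing (MvPolynomial (Fin n) K))) = T := Subtype.range_coe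
  -- every variable is integral over M
  have hint : ∀ j : Fin n, IsIntegral ↥M (xi j) := by
    intro j
    by_cases hmem : xi j ∈ T
    · have hmem' : xi j ∈ M := IntermediateField.subset_adjoin _ _ (by rw [hST]; exact hmem)
      exact isIntegral_algebraMap (R := ↥M) (x := (⟨xi j, hmem'⟩ : ↥M))
    · by_contra hni
      have htr : Transcendental ↥M (xi j) := fun halg => hni halg.isIntegral
      have htr2 : Transcendental (Algebra.adjoin ↥L (Set.range ((↑) : T → (FractionRing (MvPolynomial (Fin n) K))))) (xi j) :=
        Transcendental.of_tower_top_of_subalgebra_le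
          (IntermediateField.algebra_adjoin_le_adjoin (↥L) _) htr
      have hopt := (hT.option_iff_transcendental (xi j)).2 htr2
      have h5 := hopt.to_subtype_range
      have h6 : Set.range (fun o : Option T => o.elim (xi j) (↑)) = insert (xi j) T := by
        ext z
        constructor
        · rintro ⟨o, rfl⟩
          cases o with
          | none => exact Set.mem_insert _ _
          | some t => exact Set.mem_insert_of_mem _ t.2
        · rintro (rfl | hz)
          · exact ⟨none, rfl⟩
          · exact ⟨some ⟨z, hz⟩, rfl⟩
      rw [h6] at h5
      have hsub := hTmax.2 ⟨h5, Set.insert_subset ⟨j, rfl⟩ hTsub⟩ (Set.subset_insert _ _)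
      exact hmem (hsub (Set.mem_insert _ _))
  -- (FractionRing (MvPolynomial (Fin n) K)) is finite over M
  haveI : FiniteDimensional ↥M (FractionRing (MvPolynomial (Fin n) K)) := by
    haveI : Finite ↥(Set.range xi) := (Set.finite_range xi).to_subtype
    have h7 := IntermediateField.finiteDimensional_adjoin (K := ↥M) (L := (FractionRing (MvPolynomial (Fin n) K)))
      (S := Set.range xi) (fun x hx => by obtain ⟨j, rfl⟩ := hx; exact hint j)
    haveI : IsScalarTower K ↥M (FractionRing (MvPolynomial (Fin n) K)) :=
      IsScalarTower.of_algebraMap_eq fun c => by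
        rw [IsScalarTower.algebraMap_apply K ↥L ↥M, ← IsScalarTower.algebraMap_apply ↥L ↥M,
          ← IsScalarTower.algebraMap_apply K ↥L]
    rw [aux_gen K n ↥M] at h7
    exact (IntermediateField.topEquiv (F := ↥M) (E := (FractionRing (MvPolynomial (Fin n) K)))).toLinearEquiv.finiteDimensional
  -- degree bound
  have hbound : ∀ x : (FractionRing (MvPolynomial (Fin n) K)), x ∈ F →
      Module.finrank ↥L ↥(IntermediateField.adjoin ↥L {x}) ≤ Module.finrank ↥M (FractionRing (MvPolynomial (Fin n) K)) := by
    intro x hx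
    have hxint : IsIntegral ↥L x := (hsep x hx).1
    rw [IntermediateField.adjoin.finrank hxint]
    have heq := aux_minpoly_map (↥T) (hT.aevalEquivField) hxint
    have hdeq : (minpoly ↥L x).natDegree = (minpoly ↥M x).natDegree := by
      rw [heq, Polynomial.natDegree_map_eq_of_injective (algebraMap ↥L ↥M).injective]
    rw [hdeq]
    exact minpoly.natDegree_le x
  -- pick an element of maximal degree
  set rk : (FractionRing (MvPolynomial (Fin n) K)) → ℕ := fun x => Module.finrank ↥L ↥(IntermediateField.adjoin ↥L {x}) with hrkdef
  have hne : (rk '' (F : Set (FractionRing (MvPolynomial (Fin n) K)))).Nonempty := ⟨rk 1, ⟨1, F.one_mem, rfl⟩⟩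
  have hbdd : BddAbove (rk '' (F : Set (FractionRing (MvPolynomial (Fin n) K)))) :=
    ⟨Module.finrank ↥M (FractionRing (MvPolynomial (Fin n) K)), by rintro _ ⟨x, hx, rfl⟩; exact hbound x hx⟩
  obtain ⟨x₀, hx₀F, hx₀eq⟩ := Nat.sSup_mem hne hbdd
  have hmax : ∀ y : (FractionRing (MvPolynomial (Fin n) K)), y ∈ F → rk y ≤ rk x₀ := fun y hy => by
    rw [hx₀eq]; exact le_csSup hbdd ⟨y, hy, rfl⟩
  -- main claim
  have hclaim : ∀ y : (FractionRing (MvPolynomial (Fin n) K)), y ∈ F → y ∈ IntermediateField.adjoin ↥L {x₀} := by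
    intro y hy
    set E' := IntermediateField.adjoin ↥L {x₀, y} with hE'def
    have hpair : ∀ z ∈ ({x₀, y} : Set (FractionRing (MvPolynomial (Fin n) K))), z ∈ F := by
      rintro z (rfl | rfl)
      exacts [hx₀F, hy]
    haveI : Finite ↥({x₀, y} : Set (FractionRing (MvPolynomial (Fin n) K))) :=
      ((Set.finite_singleton y).insert x₀).to_subtype
    haveI : FiniteDimensional ↥L ↥E' :=
      IntermediateField.finiteDimensional_adjoin (fun z hz => (hsep z (hpair z hz)).1)
    haveI : Algebra.IsSeparable ↥L ↥E' :=
      (IntermediateField.isSeparable_adjoin_iff_isSeparable _ _).2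
        (fun z hz => (hsep z (hpair z hz)).2)
    obtain ⟨α, hα⟩ := Field.exists_primitive_element ↥L ↥E'
    have hαF : (α : (FractionRing (MvPolynomial (Fin n) K))) ∈ F := by
      have hmem : (α : (FractionRing (MvPolynomial (Fin n) K))) ∈ E' := α.2
      have hE'F : E' ≤ IntermediateField.extendScalars hLF :=
        IntermediateField.adjoin_le_iff.2 (fun z hz => hpair z hz)
      exact hE'F hmem
    have hEα : IntermediateField.adjoin ↥L {(α : (FractionRing (MvPolynomial (Fin n) K)))} = E' := by
      have hmap := congrArg (IntermediateField.map E'.val) hα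
      rw [IntermediateField.adjoin_map, Set.image_singleton] at hmap
      have htopmap : (⊤ : IntermediateField ↥L ↥E').map E'.val = E' := by
        ext z
        constructor
        · rintro ⟨w, -, rfl⟩
          exact w.2
        · intro hz
          exact ⟨⟨z, hz⟩, trivial, rfl⟩
      rwa [htopmap] at hmap
    have hle1 : IntermediateField.adjoin ↥L {x₀} ≤ E' :=
      IntermediateField.adjoin_le_iff.2 (Set.singleton_subset_iff.2
        (IntermediateField.subset_adjoin _ _ (Set.mem_insert _ _)))
    have hfr : Module.finrank ↥L ↥E' ≤ Module.finrank ↥L ↥(IntermediateField.adjoin ↥L {x₀}) := by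
      have h8 := hmax (α : (FractionRing (MvPolynomial (Fin n) K))) hαF
      rw [hrkdef] at h8
      simp only at h8
      rwa [hEα] at h8
    have h9 := IntermediateField.eq_of_le_of_finrank_le hle1 hfr
    rw [h9]
    exact IntermediateField.subset_adjoin _ _ (Set.mem_insert_of_mem _ rfl)
  -- conclusion
  refine ⟨insert x₀ B, ?_, ?_⟩
  · calc (insert x₀ B).card ≤ B.card + 1 := Finset.card_insert_le _ _
      _ = d + 1 := by rw [hcard]
  · have hF' : IntermediateField.adjoin ↥L {x₀} = IntermediateField.extendScalars hLF := by
      apply le_antisymm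
      · exact IntermediateField.adjoin_le_iff.2 (Set.singleton_subset_iff.2 hx₀F)
      · intro z hz
        exact hclaim z hz
    have h10 : IntermediateField.restrictScalars K (IntermediateField.adjoin ↥L {x₀}) = F := by
      rw [hF', IntermediateField.extendScalars_restrictScalars]
    rw [Finset.coe_insert, Set.insert_eq, Set.union_comm, ← IntermediateField.adjoin_adjoin_left]
    exact h10
end

section
/- Let K be a field and f ∈ K(x₁,…,xₙ) be a nonconstant rational function. If the field K(f₁,…,f_m) generated by polynomials p₁,…,pₙ ∈ K[x₁,…,xₙ] equals K(f) for some f, and K(p₁,…,pₙ) contains a nonconstant polynomial, then the Lüroth generator f can be chosen to be a polynomial, and each pᵢ = qᵢ(f) for univariate polynomials qᵢ ∈ K[t]. -/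
open Polynomial
set_option maxHeartbeats 1000000
set_option synthInstance.maxHeartbeats 400000


theorem luroth_rep {F E : Type*} [Field F] [Field E] [Algebra F E] {α x : E}
    (hx : x ∈ IntermediateField.adjoin F {α}) (hx0 : x ≠ 0) :
    ∃ u v : F[X], IsCoprime u v ∧ aeval α v ≠ 0 ∧ x * aeval α v = aeval α u := by
  classical
  obtain ⟨u, v, h⟩ := (IntermediateField.mem_adjoin_simple_iff F x).1 hx
  have hv : aeval α v ≠ 0 := by
    intro h0
    rw [h0, div_zero] at h
    exact hx0 h
  have hv0 : v ≠ 0 := by rintro rfl; simp at hv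
  set d := GCDMonoid.gcd u v with hd
  have hdne : d ≠ 0 := gcd_ne_zero_of_right hv0
  have hu1 : d * (u / d) = u := EuclideanDomain.mul_div_cancel' hdne (gcd_dvd_left u v)
  have hv1 : d * (v / d) = v := EuclideanDomain.mul_div_cancel' hdne (gcd_dvd_right u v)
  have hco : IsCoprime (u / d) (v / d) := isCoprime_div_gcd_div_gcd hv0
  have havd : aeval α d * aeval α (v / d) = aeval α v := by rw [← map_mul, hv1]
  have hdα : aeval α d ≠ 0 := fun h0 => hv (by rw [← havd, h0, zero_mul])
  have hvdα : aeval α (v / d) ≠ 0 := fun h0 => hv (by rw [← havd, h0, mul_zero])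
  refine ⟨u / d, v / d, hco, hvdα, ?_⟩
  have h2 : x = aeval α (d * (u / d)) / aeval α (d * (v / d)) := by rw [hu1, hv1]; exact h
  rw [map_mul, map_mul, mul_div_mul_left _ _ hdα] at h2
  rw [h2, div_mul_cancel₀ _ hvdα]

theorem luroth_isUnit_eq_C {F : Type*} [Field F] : ∀ {n : ℕ} (x : MvPolynomial (Fin n) F),
    IsUnit x → ∃ c : F, x = MvPolynomial.C c := by
  intro n
  induction n with
  | zero =>
    intro x _
    exact ⟨MvPolynomial.constantCoeff x, (MvPolynomial.eq_C_of_isEmpty x)⟩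
  | succ n ih =>
    intro x hx
    have hx' : IsUnit (MvPolynomial.finSuccEquiv F n x) :=
      hx.map ((MvPolynomial.finSuccEquiv F n).toAlgHom : MvPolynomial (Fin (n+1)) F →ₐ[F] _)
    obtain ⟨r, hr, hCr⟩ := Polynomial.isUnit_iff.1 hx'
    obtain ⟨c, rfl⟩ := ih r hr
    refine ⟨c, (MvPolynomial.finSuccEquiv F n).injective ?_⟩
    rw [← hCr]
    have := congrArg (fun f => f c) (MvPolynomial.finSuccEquiv_comp_C_eq_C (R := F) n)
    simp only [RingHom.coe_comp, Function.comp_apply] at this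
    have h2 : (MvPolynomial.finSuccEquiv F n).symm (C (MvPolynomial.C c)) = MvPolynomial.C c :=
      this
    rw [← h2, AlgEquiv.apply_symm_apply]

theorem luroth_step2 {F : Type*} [Field F] {n : ℕ} (f p : MvPolynomial (Fin n) F)
    (hp : algebraMap (MvPolynomial (Fin n) F) (FractionRing (MvPolynomial (Fin n) F)) p ∈
      IntermediateField.adjoin F
        {algebraMap (MvPolynomial (Fin n) F) (FractionRing (MvPolynomial (Fin n) F)) f}) :
    ∃ q : F[X], p = aeval f q := by
  have hinj : Function.Injective
      (algebraMap (MvPolynomial (Fin n) F) (FractionRing (MvPolynomial (Fin n) F))) :=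
    IsFractionRing.injective _ _
  by_cases hp0 : p = 0
  · exact ⟨0, by simp [hp0]⟩
  have hne : algebraMap (MvPolynomial (Fin n) F) (FractionRing (MvPolynomial (Fin n) F)) p ≠ 0 :=
    fun h => hp0 (hinj (by rw [h, map_zero]))
  obtain ⟨u, v, hco, hvα, heq⟩ := luroth_rep hp hne
  have key : p * aeval f v = aeval f u := by
    apply hinj
    rw [map_mul, ← Polynomial.aeval_algebraMap_apply, ← Polynomial.aeval_algebraMap_apply]
    exact heq
  obtain ⟨A, B, hAB⟩ := hco
  have hAB' : aeval f A * aeval f u + aeval f B * aeval f v = 1 := by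
    have := congrArg (aeval f) hAB
    simpa only [map_add, map_mul, map_one] using this
  have hunit : IsUnit (aeval f v) := by
    refine IsUnit.of_mul_eq_one (aeval f A * p + aeval f B) ?_
    calc aeval f v * (aeval f A * p + aeval f B)
        = aeval f A * (p * aeval f v) + aeval f B * aeval f v := by ring
      _ = aeval f A * aeval f u + aeval f B * aeval f v := by rw [key]
      _ = 1 := hAB'
  obtain ⟨c, hc⟩ := luroth_isUnit_eq_C _ hunit
  have hcne : c ≠ 0 := by
    intro h0
    rw [h0, map_zero] at hc
    apply hvα
    rw [Polynomial.aeval_algebraMap_apply, hc, map_zero]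
  refine ⟨u * Polynomial.C c⁻¹, ?_⟩
  rw [map_mul, Polynomial.aeval_C, ← key, hc, MvPolynomial.algebraMap_eq, mul_assoc,
    ← MvPolynomial.C_mul, mul_inv_cancel₀ hcne, MvPolynomial.C_1, mul_one]

theorem luroth_eq_C_of {F : Type*} [Field F] {σ : Type*} (x : MvPolynomial σ F)
    (h : ∀ μ : σ →₀ ℕ, μ ≠ 0 → MvPolynomial.coeff μ x = 0) :
    x = MvPolynomial.C (MvPolynomial.coeff 0 x) := by
  apply MvPolynomial.ext
  intro μ
  by_cases hμ : μ = 0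
  · subst hμ; simp [MvPolynomial.coeff_C]
  · classical
    rw [MvPolynomial.coeff_C, if_neg (Ne.symm hμ), h μ hμ]

theorem luroth_exists_coeff {F : Type*} [Field F] {σ : Type*} {x : MvPolynomial σ F}
    (h : x ∉ Set.range (MvPolynomial.C : F → MvPolynomial σ F)) :
    ∃ μ : σ →₀ ℕ, μ ≠ 0 ∧ MvPolynomial.coeff μ x ≠ 0 := by
  by_contra hc
  push_neg at hc
  exact h ⟨_, (luroth_eq_C_of x fun μ hμ => hc μ hμ).symm⟩


noncomputable def lurothH {F : Type*} [Field F] {n : ℕ} (v : F[X])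
    (a b : MvPolynomial (Fin n) F) (D : ℕ) : MvPolynomial (Fin n) F :=
  ∑ i ∈ Finset.range (D + 1), MvPolynomial.C (v.coeff i) * a ^ i * b ^ (D - i)

theorem lurothH_spec {F : Type*} [Field F] {n : ℕ} (v : F[X])
    (a b : MvPolynomial (Fin n) F) (D : ℕ) (hD : v.natDegree ≤ D)
    (f₀ : FractionRing (MvPolynomial (Fin n) F))
    (hf : f₀ * algebraMap _ _ b = algebraMap _ _ a) :
    algebraMap (MvPolynomial (Fin n) F) (FractionRing (MvPolynomial (Fin n) F)) (lurothH v a b D)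
      = algebraMap (MvPolynomial (Fin n) F) (FractionRing (MvPolynomial (Fin n) F)) b ^ D
          * aeval f₀ v := by
  set ιm := algebraMap (MvPolynomial (Fin n) F) (FractionRing (MvPolynomial (Fin n) F))
  rw [Polynomial.aeval_eq_sum_range' (lt_of_le_of_lt hD (Nat.lt_succ_self D))]
  rw [lurothH, map_sum, Finset.mul_sum]
  refine Finset.sum_congr rfl fun i hi => ?_
  have hiD : i ≤ D := Nat.lt_succ_iff.1 (Finset.mem_range.1 hi)
  rw [map_mul, map_mul, map_pow, map_pow, ← hf]
  have hC : ιm (MvPolynomial.C (v.coeff i)) = algebraMap F _ (v.coeff i) := by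
    rw [← MvPolynomial.algebraMap_eq, ← IsScalarTower.algebraMap_apply]
  rw [hC, Algebra.smul_def, mul_pow]
  have hpow : (ιm b) ^ i * (ιm b) ^ (D - i) = (ιm b) ^ D := by
    rw [← pow_add, Nat.add_sub_cancel' hiD]
  calc algebraMap F _ (v.coeff i) * (f₀ ^ i * ιm b ^ i) * ιm b ^ (D - i)
      = algebraMap F _ (v.coeff i) * f₀ ^ i * (ιm b ^ i * ιm b ^ (D - i)) := by ring
    _ = ιm b ^ D * (algebraMap F _ (v.coeff i) * f₀ ^ i) := by rw [hpow]; ring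

theorem lurothH_map {F F' : Type*} [Field F] [Field F'] (φ : F →+* F') {n : ℕ} (v : F[X])
    (a b : MvPolynomial (Fin n) F) (D : ℕ) :
    MvPolynomial.map φ (lurothH v a b D)
      = lurothH (v.map φ) (MvPolynomial.map φ a) (MvPolynomial.map φ b) D := by
  rw [lurothH, lurothH, map_sum]
  refine Finset.sum_congr rfl fun i _ => ?_
  rw [map_mul, map_mul, map_pow, map_pow, MvPolynomial.map_C, Polynomial.coeff_map]


theorem luroth_step1 {F : Type*} [Field F] {n : ℕ}
    (f₀ : FractionRing (MvPolynomial (Fin n) F)) (g : MvPolynomial (Fin n) F)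
    (hgC : g ∉ Set.range (MvPolynomial.C : F → MvPolynomial (Fin n) F))
    (hg : algebraMap (MvPolynomial (Fin n) F) (FractionRing (MvPolynomial (Fin n) F)) g ∈
      IntermediateField.adjoin F {f₀}) :
    ∃ f : MvPolynomial (Fin n) F, IntermediateField.adjoin F {f₀} =
      IntermediateField.adjoin F
        {algebraMap (MvPolynomial (Fin n) F) (FractionRing (MvPolynomial (Fin n) F)) f} := by
  classical
  set ιm := algebraMap (MvPolynomial (Fin n) F) (FractionRing (MvPolynomial (Fin n) F)) with him
  have hinj : Function.Injective ιm := IsFractionRing.injective _ _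
  have hCalg : ∀ c : F, ιm (MvPolynomial.C c) = algebraMap F _ c := fun c => by
    rw [him, ← MvPolynomial.algebraMap_eq, ← IsScalarTower.algebraMap_apply]
  -- coprime representation of f₀
  obtain ⟨a0, b0, hb0, hf0⟩ := IsFractionRing.div_surjective (A := MvPolynomial (Fin n) F) f₀
  have hb0' : b0 ≠ 0 := nonZeroDivisors.ne_zero hb0
  obtain ⟨a, b, c', hrel, hca, hcb⟩ :=
    UniqueFactorizationMonoid.exists_reduced_factors' a0 b0 hb0'
  have hc'ne : c' ≠ 0 := fun h => hb0' (by rw [← hcb, h, zero_mul])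
  have hbne : b ≠ 0 := fun h => hb0' (by rw [← hcb, h, mul_zero])
  have hιbne : ιm b ≠ 0 := fun h => hbne (hinj (by rw [h, map_zero]))
  have hιc'ne : ιm c' ≠ 0 := fun h => hc'ne (hinj (by rw [h, map_zero]))
  have hdiv : ιm a / ιm b = f₀ := by
    rw [← hf0, ← hca, ← hcb, map_mul, map_mul, mul_div_mul_left _ _ hιc'ne]
  have hf : f₀ * ιm b = ιm a := by rw [← hdiv, div_mul_cancel₀ _ hιbne]
  by_cases hbC : b ∈ Set.range (MvPolynomial.C : F → MvPolynomial (Fin n) F)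
  · obtain ⟨cb, rfl⟩ := hbC
    have hcb0 : cb ≠ 0 := fun h => hbne (by rw [h, map_zero])
    have halgcb : algebraMap F (FractionRing (MvPolynomial (Fin n) F)) cb ≠ 0 :=
      fun h => hcb0 ((algebraMap F _).injective (by rw [h, map_zero]))
    refine ⟨a, le_antisymm ?_ ?_⟩
    · rw [IntermediateField.adjoin_le_iff, Set.singleton_subset_iff]
      have h1 : f₀ = ιm a * (algebraMap F _ cb)⁻¹ := by
        rw [← hdiv, hCalg, div_eq_mul_inv]
      rw [h1]
      exact mul_mem (IntermediateField.mem_adjoin_simple_self F _)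
        (inv_mem (IntermediateField.algebraMap_mem _ cb))
    · rw [IntermediateField.adjoin_le_iff, Set.singleton_subset_iff]
      have h1 : ιm a = f₀ * algebraMap F _ cb := by rw [← hf, hCalg]
      rw [SetLike.mem_coe, h1]
      exact mul_mem (IntermediateField.mem_adjoin_simple_self F _)
        (IntermediateField.algebraMap_mem _ cb)
  · -- main case : b is not constant
    have hg0 : g ≠ 0 := fun h => hgC ⟨0, by rw [h, map_zero]⟩
    have hgne : ιm g ≠ 0 := fun h => hg0 (hinj (by rw [h, map_zero]))
    obtain ⟨u, v, hco, hvα, heq⟩ := luroth_rep hg hgne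
    have hv0 : v ≠ 0 := by rintro rfl; simp at hvα
    have hu0 : u ≠ 0 := by
      rintro rfl
      rw [map_zero] at heq
      exact hgne (by
        rcases mul_eq_zero.1 heq with h | h
        · exact h
        · exact absurd h hvα)
    set m := max u.natDegree v.natDegree with hm
    set U := lurothH u a b m with hU'
    set V := lurothH v a b m with hV'
    have hU : ιm U = ιm b ^ m * aeval f₀ u :=
      lurothH_spec u a b m (le_max_left _ _) f₀ hf
    have hV : ιm V = ιm b ^ m * aeval f₀ v :=
      lurothH_spec v a b m (le_max_right _ _) f₀ hf
    have hUV : U = g * V := by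
      apply hinj
      rw [hU, map_mul, hV, ← heq]
      ring
    have hVne : V ≠ 0 := by
      intro h
      rw [h, map_zero] at hV
      exact (mul_ne_zero (pow_ne_zero m hιbne) hvα) hV.symm
    have h1 : V ∣ U := ⟨g, by rw [hUV]; ring⟩
    obtain ⟨A, B, hAB⟩ := hco
    set N := max A.natDegree B.natDegree with hN
    have hABα : aeval f₀ A * aeval f₀ u + aeval f₀ B * aeval f₀ v = 1 := by
      have := congrArg (aeval f₀) hAB
      simpa only [map_add, map_mul, map_one] using this
    have hkey : lurothH A a b N * U + lurothH B a b N * V = b ^ (N + m) := by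
      apply hinj
      rw [map_add, map_mul, map_mul, map_pow, hU, hV,
        lurothH_spec A a b N (le_max_left _ _) f₀ hf,
        lurothH_spec B a b N (le_max_right _ _) f₀ hf, pow_add]
      linear_combination (ιm b ^ N * ιm b ^ m) * hABα
    have hVdvd : V ∣ b ^ (N + m) := by
      rw [← hkey]
      exact dvd_add (h1.mul_left _) (dvd_mul_left V _)
    have hbnu : ¬IsUnit b := fun h =>
      hbC (let ⟨c, hc⟩ := luroth_isUnit_eq_C b h; ⟨c, hc.symm⟩)
    obtain ⟨π, hπirr, hπb⟩ := WfDvdMonoid.exists_irreducible_factor hbnu hbne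
    have hπ : Prime π := (UniqueFactorizationMonoid.irreducible_iff_prime).1 hπirr
    have hπa : ¬π ∣ a := fun hd => hπ.not_unit (hrel hd hπb)
    -- lower-part divisibility helper
    have hlow : ∀ w : F[X], b ∣ ∑ i ∈ Finset.range m, MvPolynomial.C (w.coeff i) * a ^ i * b ^ (m - i) := by
      intro w
      refine Finset.dvd_sum fun i hi => ?_
      have him' : i < m := Finset.mem_range.1 hi
      exact ((dvd_pow_self b (Nat.sub_ne_zero_of_lt him')).mul_left _)
    have hsplitgen : ∀ w : F[X], lurothH w a b m =
        (∑ i ∈ Finset.range m, MvPolynomial.C (w.coeff i) * a ^ i * b ^ (m - i)) +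
          MvPolynomial.C (w.coeff m) * a ^ m := by
      intro w
      rw [lurothH, Finset.sum_range_succ, Nat.sub_self, pow_zero, mul_one]
    have hvm : v.natDegree = m := by
      by_contra hne'
      have hvlt : v.natDegree < m := lt_of_le_of_ne (le_max_right _ _) hne'
      have hum : u.natDegree = m := by
        rcases max_choice u.natDegree v.natDegree with h | h
        · exact (hm.trans h).symm
        · exact absurd (hm.trans h).symm (Nat.ne_of_lt hvlt)
      have hbV : b ∣ V := by
        rw [hV', hsplitgen v]
        have : (MvPolynomial.C (v.coeff m) : MvPolynomial (Fin n) F) = 0 := by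
          rw [Polynomial.coeff_eq_zero_of_natDegree_lt hvlt, map_zero]
        rw [this, zero_mul, add_zero]
        exact hlow v
      have hπU : π ∣ U := (hπb.trans hbV).trans h1
      have hπC : π ∣ MvPolynomial.C (u.coeff m) * a ^ m := by
        have h2 : π ∣ ∑ i ∈ Finset.range m, MvPolynomial.C (u.coeff i) * a ^ i * b ^ (m - i) :=
          hπb.trans (hlow u)
        rw [hU', hsplitgen u] at hπU
        exact (dvd_add_right h2).1 hπU
      have hucm : u.coeff m ≠ 0 := by
        rw [← hum]
        exact Polynomial.leadingCoeff_ne_zero.2 hu0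
      have hπam : π ∣ a ^ m := by
        rcases hπ.2.2 _ _ hπC with h2 | h2
        · exact absurd (isUnit_of_dvd_unit h2 ((isUnit_iff_ne_zero.2 hucm).map MvPolynomial.C))
            hπ.not_unit
        · exact h2
      exact hπa (hπ.dvd_of_dvd_pow hπam)
    have hm1 : 1 ≤ m := by
      rcases Nat.eq_zero_or_pos m with h0 | h1'
      · exfalso
        have hud : u.natDegree = 0 := le_antisymm (h0 ▸ le_max_left _ _) (Nat.zero_le _)
        have hvd : v.natDegree = 0 := le_antisymm (h0 ▸ le_max_right _ _) (Nat.zero_le _)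
        obtain ⟨cu, hcu⟩ : ∃ c, u = Polynomial.C c := ⟨_, Polynomial.eq_C_of_natDegree_eq_zero hud⟩
        obtain ⟨cv, hcv⟩ : ∃ c, v = Polynomial.C c := ⟨_, Polynomial.eq_C_of_natDegree_eq_zero hvd⟩
        have hcv0 : cv ≠ 0 := fun h => hv0 (by rw [hcv, h, map_zero])
        apply hgC
        refine ⟨cu * cv⁻¹, ?_⟩
        apply hinj
        rw [hcu, hcv, Polynomial.aeval_C, Polynomial.aeval_C] at heq
        have hacv : (algebraMap F (FractionRing (MvPolynomial (Fin n) F))) cv ≠ 0 :=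
          fun h => hcv0 ((algebraMap F _).injective (by rw [h, map_zero]))
        rw [hCalg, map_mul, map_inv₀, inv_eq_one_div, mul_one_div, div_eq_iff hacv]
        exact heq.symm
      · exact h1'
    -- V is a unit
    have hVunit : IsUnit V := by
      by_contra hnu
      obtain ⟨q, hqirr, hqV⟩ := WfDvdMonoid.exists_irreducible_factor hnu hVne
      have hq : Prime q := (UniqueFactorizationMonoid.irreducible_iff_prime).1 hqirr
      have hqb : q ∣ b := hq.dvd_of_dvd_pow (hqV.trans hVdvd)
      have hqC : q ∣ MvPolynomial.C (v.coeff m) * a ^ m := by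
        have h2 : q ∣ ∑ i ∈ Finset.range m, MvPolynomial.C (v.coeff i) * a ^ i * b ^ (m - i) :=
          hqb.trans (hlow v)
        rw [hV', hsplitgen v] at hqV
        exact (dvd_add_right h2).1 hqV
      have hvcm : v.coeff m ≠ 0 := by
        rw [← hvm]
        exact Polynomial.leadingCoeff_ne_zero.2 hv0
      have hqa : q ∣ a := by
        apply hq.dvd_of_dvd_pow (n := m)
        rcases hq.2.2 _ _ hqC with h2 | h2
        · exact absurd (isUnit_of_dvd_unit h2 ((isUnit_iff_ne_zero.2 hvcm).map MvPolynomial.C))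
            hq.not_unit
        · exact h2
      exact hq.not_unit (hrel hqa hqb)
    obtain ⟨cV, hcV⟩ := luroth_isUnit_eq_C V hVunit
    have hcVne : cV ≠ 0 := fun h => hVne (by rw [hcV, h, map_zero])
    -- pass to the algebraic closure
    set F' := AlgebraicClosure F with hF'
    set φ := algebraMap F F' with hφ
    set abar := MvPolynomial.map φ a with habar
    set bbar := MvPolynomial.map φ b with hbbar
    set vbar := Polynomial.map φ v with hvbar
    have hmapinj : Function.Injective (MvPolynomial.map (σ := Fin n) φ) :=
      MvPolynomial.map_injective φ (RingHom.injective φ)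
    have hbbar0 : bbar ≠ 0 := fun h => hbne (hmapinj (by rw [hbbar] at h; rw [h, map_zero]))
    set ι' := algebraMap (MvPolynomial (Fin n) F') (FractionRing (MvPolynomial (Fin n) F'))
      with hι'
    have hinj' : Function.Injective ι' :=
      IsFractionRing.injective (MvPolynomial (Fin n) F') (FractionRing (MvPolynomial (Fin n) F'))
    have hC' : ∀ c : F', ι' (MvPolynomial.C c) = algebraMap F' _ c := fun c => by
      rw [hι', ← MvPolynomial.algebraMap_eq, ← IsScalarTower.algebraMap_apply]
    have hι'b : ι' bbar ≠ 0 := fun h => hbbar0 (hinj' (by rw [h, map_zero]))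
    set φ₀ := ι' abar / ι' bbar with hφ₀
    have hf' : φ₀ * ι' bbar = ι' abar := div_mul_cancel₀ _ hι'b
    have hdegvbar : vbar.natDegree = m := by
      rw [hvbar, Polynomial.natDegree_map_eq_of_injective (RingHom.injective φ)]
      exact hvm
    have hsp : vbar.Splits := IsAlgClosed.splits vbar
    have hprod := hsp.eq_prod_roots
    have hcard : vbar.roots.card = m := by
      rw [Polynomial.splits_iff_card_roots.1 hsp, hdegvbar]
    have haev : aeval φ₀ vbar =
        algebraMap F' _ vbar.leadingCoeff *
          (vbar.roots.map fun r => φ₀ - algebraMap F' _ r).prod := by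
      conv_lhs => rw [hprod]
      rw [map_mul, Polynomial.aeval_C, map_multiset_prod, Multiset.map_map,
        Function.comp_def]
      refine congrArg _ (congrArg Multiset.prod (Multiset.map_congr rfl fun r _ => ?_))
      rw [map_sub, Polynomial.aeval_X, Polynomial.aeval_C]
    have hpow' : (vbar.roots.map fun _ => ι' bbar).prod = ι' bbar ^ m := by
      rw [Multiset.map_const', Multiset.prod_replicate, hcard]
    have hkey2 : ι' (lurothH vbar abar bbar m) =
        ι' (MvPolynomial.C vbar.leadingCoeff *
          (vbar.roots.map fun r => abar - MvPolynomial.C r * bbar).prod) := by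
      rw [lurothH_spec vbar abar bbar m (le_of_eq hdegvbar) φ₀ hf', haev]
      rw [map_mul, map_multiset_prod, Multiset.map_map, Function.comp_def, hC']
      calc ι' bbar ^ m * (algebraMap F' _ vbar.leadingCoeff *
              (vbar.roots.map fun r => φ₀ - algebraMap F' _ r).prod)
          = algebraMap F' _ vbar.leadingCoeff *
              ((vbar.roots.map fun r => φ₀ - algebraMap F' _ r).prod *
                (vbar.roots.map fun _ => ι' bbar).prod) := by rw [hpow']; ring
        _ = algebraMap F' _ vbar.leadingCoeff *
              (vbar.roots.map fun r => (φ₀ - algebraMap F' _ r) * ι' bbar).prod := by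
            rw [Multiset.prod_map_mul]
        _ = algebraMap F' _ vbar.leadingCoeff *
              (vbar.roots.map fun r => ι' (abar - MvPolynomial.C r * bbar)).prod := by
            refine congrArg _ (congrArg Multiset.prod (Multiset.map_congr rfl fun r _ => ?_))
            rw [map_sub, map_mul, hC', sub_mul, hf']
    have hfactors : MvPolynomial.C vbar.leadingCoeff *
        (vbar.roots.map fun r => abar - MvPolynomial.C r * bbar).prod =
        MvPolynomial.C (φ cV) := by
      have h3 : lurothH vbar abar bbar m = MvPolynomial.map φ V := by
        rw [hV', lurothH_map, ← hvbar, ← habar, ← hbbar]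
      calc MvPolynomial.C vbar.leadingCoeff *
            (vbar.roots.map fun r => abar - MvPolynomial.C r * bbar).prod
          = lurothH vbar abar bbar m := (hinj' hkey2).symm
        _ = MvPolynomial.map φ V := h3
        _ = MvPolynomial.C (φ cV) := by rw [hcV, MvPolynomial.map_C]
    have hφcV : φ cV ≠ 0 := fun h => hcVne (RingHom.injective φ (by rw [h, map_zero]))
    have hprodunit :
        IsUnit ((vbar.roots.map fun r => abar - MvPolynomial.C r * bbar).prod) := by
      have hCu : IsUnit (MvPolynomial.C (φ cV) : MvPolynomial (Fin n) F') :=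
        (isUnit_iff_ne_zero.2 hφcV).map MvPolynomial.C
      have h4 : IsUnit (MvPolynomial.C vbar.leadingCoeff *
          (vbar.roots.map fun r => abar - MvPolynomial.C r * bbar).prod) := by
        rw [hfactors]; exact hCu
      exact isUnit_of_mul_isUnit_right h4
    have hrne : vbar.roots ≠ 0 := by
      intro h
      rw [h, Multiset.card_zero] at hcard
      omega
    obtain ⟨r, hr⟩ := Multiset.exists_mem_of_ne_zero hrne
    have hfac : IsUnit (abar - MvPolynomial.C r * bbar) := by
      have hmem : (abar - MvPolynomial.C r * bbar) ∈
          vbar.roots.map fun r => abar - MvPolynomial.C r * bbar :=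
        Multiset.mem_map_of_mem _ hr
      have h5 := Multiset.cons_erase hmem
      rw [← h5, Multiset.prod_cons] at hprodunit
      exact isUnit_of_mul_isUnit_left hprodunit
    obtain ⟨δbar, hδbar⟩ := luroth_isUnit_eq_C _ hfac
    -- descend to F
    obtain ⟨μ, hμ0, hμb⟩ := luroth_exists_coeff hbC
    have hφbμ : φ (MvPolynomial.coeff μ b) ≠ 0 :=
      fun h => hμb (RingHom.injective φ (by rw [h, map_zero]))
    have hcoeff := congrArg (MvPolynomial.coeff μ) hδbar
    rw [MvPolynomial.coeff_sub, MvPolynomial.coeff_C_mul, habar, hbbar,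
      MvPolynomial.coeff_map, MvPolynomial.coeff_map, MvPolynomial.coeff_C,
      if_neg (Ne.symm hμ0)] at hcoeff
    set r₀ := MvPolynomial.coeff μ a * (MvPolynomial.coeff μ b)⁻¹ with hr₀def
    have hrφ : r = φ r₀ := by
      have h2 : φ (MvPolynomial.coeff μ a) = r * φ (MvPolynomial.coeff μ b) :=
        sub_eq_zero.1 hcoeff
      rw [hr₀def, map_mul, map_inv₀, h2, mul_assoc, mul_inv_cancel₀ hφbμ, mul_one]
    have hwμ : ∀ ν : (Fin n →₀ ℕ), ν ≠ 0 →
        MvPolynomial.coeff ν (a - MvPolynomial.C r₀ * b) = 0 := by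
      intro ν hν
      have hmapw : MvPolynomial.map φ (a - MvPolynomial.C r₀ * b) = MvPolynomial.C δbar := by
        rw [map_sub, map_mul, MvPolynomial.map_C, ← hrφ, ← habar, ← hbbar, hδbar]
      have h6 := congrArg (MvPolynomial.coeff ν) hmapw
      rw [MvPolynomial.coeff_map, MvPolynomial.coeff_C, if_neg (Ne.symm hν)] at h6
      exact RingHom.injective φ (by rw [h6, map_zero])
    have hweq := luroth_eq_C_of _ hwμ
    set δ := MvPolynomial.coeff 0 (a - MvPolynomial.C r₀ * b) with hδdef
    have ha2 : a = MvPolynomial.C r₀ * b + MvPolynomial.C δ := by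
      rw [← hweq]; ring
    have hδne : δ ≠ 0 := by
      intro h0
      rw [h0, map_zero, add_zero] at ha2
      have hba : b ∣ a := ⟨MvPolynomial.C r₀, by rw [ha2, mul_comm]⟩
      exact hbC (let ⟨c, hc⟩ := luroth_isUnit_eq_C b (hrel hba dvd_rfl); ⟨c, hc.symm⟩)
    have halgδ : algebraMap F (FractionRing (MvPolynomial (Fin n) F)) δ ≠ 0 :=
      fun h => hδne ((algebraMap F _).injective (by rw [h, map_zero]))
    by_cases hr0 : r₀ = 0
    · -- a is the constant δ
      have haC : a = MvPolynomial.C δ := by rw [ha2, hr0, map_zero, zero_mul, zero_add]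
      have hιa : ιm a = algebraMap F _ δ := by rw [haC, hCalg]
      have hf₀ne : f₀ ≠ 0 := by
        intro h0
        rw [h0, zero_mul] at hf
        exact halgδ (by rw [← hιa, ← hf])
      refine ⟨b, le_antisymm ?_ ?_⟩
      · rw [IntermediateField.adjoin_le_iff, Set.singleton_subset_iff]
        have h2 : f₀ = algebraMap F _ δ * (ιm b)⁻¹ := by
          rw [← hdiv, hιa, div_eq_mul_inv]
        rw [SetLike.mem_coe, h2]
        exact mul_mem (IntermediateField.algebraMap_mem _ δ)
          (inv_mem (IntermediateField.mem_adjoin_simple_self F _))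
      · rw [IntermediateField.adjoin_le_iff, Set.singleton_subset_iff]
        have h2 : ιm b = algebraMap F _ δ * f₀⁻¹ := by
          rw [← hιa, ← hf, mul_comm f₀ (ιm b), mul_assoc, mul_inv_cancel₀ hf₀ne, mul_one]
        rw [SetLike.mem_coe, h2]
        exact mul_mem (IntermediateField.algebraMap_mem _ δ)
          (inv_mem (IntermediateField.mem_adjoin_simple_self F _))
    · have halgr : algebraMap F (FractionRing (MvPolynomial (Fin n) F)) r₀ ≠ 0 :=
        fun h => hr0 ((algebraMap F _).injective (by rw [h, map_zero]))
      have hιa2 : ιm a = algebraMap F _ r₀ * ιm b + algebraMap F _ δ := by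
        conv_lhs => rw [ha2]
        rw [map_add, map_mul, hCalg, hCalg]
      refine ⟨a, le_antisymm ?_ ?_⟩
      · rw [IntermediateField.adjoin_le_iff, Set.singleton_subset_iff]
        have hbmem : ιm b ∈ IntermediateField.adjoin F {ιm a} := by
          have h2 : ιm b = (ιm a - algebraMap F _ δ) * (algebraMap F _ r₀)⁻¹ := by
            rw [hιa2, add_sub_cancel_right, mul_comm (algebraMap F _ r₀) (ιm b), mul_assoc,
              mul_inv_cancel₀ halgr, mul_one]
          rw [h2]
          exact mul_mem (sub_mem (IntermediateField.mem_adjoin_simple_self F _)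
            (IntermediateField.algebraMap_mem _ δ))
            (inv_mem (IntermediateField.algebraMap_mem _ r₀))
        have h2 : f₀ = ιm a * (ιm b)⁻¹ := by rw [← hdiv, div_eq_mul_inv]
        rw [SetLike.mem_coe, h2]
        exact mul_mem (IntermediateField.mem_adjoin_simple_self F _) (inv_mem hbmem)
      · rw [IntermediateField.adjoin_le_iff, Set.singleton_subset_iff]
        have hne2 : f₀ - algebraMap F _ r₀ ≠ 0 := by
          intro h0
          have h3 : f₀ = algebraMap F _ r₀ := sub_eq_zero.1 h0
          rw [h3] at hf
          apply halgδ
          linear_combination -hιa2 - hf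
        have h2 : ιm a * (f₀ - algebraMap F _ r₀) = algebraMap F _ δ * f₀ := by
          linear_combination f₀ * hιa2 + algebraMap F _ r₀ * hf
        have h3 : ιm a = algebraMap F _ δ * f₀ / (f₀ - algebraMap F _ r₀) :=
          (eq_div_iff hne2).2 h2
        rw [SetLike.mem_coe, h3]
        exact div_mem (mul_mem (IntermediateField.algebraMap_mem _ δ)
          (IntermediateField.mem_adjoin_simple_self F _))
          (sub_mem (IntermediateField.mem_adjoin_simple_self F _)
            (IntermediateField.algebraMap_mem _ r₀))


/-- Extended Lüroth: if the field generated by polynomials `p₁,…,pₙ` equals `K(f₀)` for some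
rational function `f₀`, and it contains a nonconstant polynomial, then a polynomial Lüroth
generator `f` exists, and each `pᵢ = qᵢ(f)` for univariate polynomials `qᵢ ∈ K[t]`. -/
theorem stmt_4 (K : Type*) [Field K] (n : ℕ)
    (p : Fin n → MvPolynomial (Fin n) K)
    (ι : MvPolynomial (Fin n) K →+* FractionRing (MvPolynomial (Fin n) K))
    (hι : ι = algebraMap (MvPolynomial (Fin n) K) (FractionRing (MvPolynomial (Fin n) K)))
    (f₀ : FractionRing (MvPolynomial (Fin n) K))
    (hgen : IntermediateField.adjoin K (Set.range fun i => ι (p i)) =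
      IntermediateField.adjoin K {f₀})
    (hpoly : ∃ g : MvPolynomial (Fin n) K, g ∉ Set.range (MvPolynomial.C : K → MvPolynomial (Fin n) K) ∧
      ι g ∈ IntermediateField.adjoin K (Set.range fun i => ι (p i))) :
    ∃ f : MvPolynomial (Fin n) K,
      IntermediateField.adjoin K (Set.range fun i => ι (p i)) = IntermediateField.adjoin K {ι f} ∧
      ∀ i, ∃ q : Polynomial K, p i = Polynomial.aeval f q := by
  subst hι
  obtain ⟨g, hgC, hgmem⟩ := hpoly
  rw [hgen] at hgmem
  obtain ⟨f, hf⟩ := luroth_step1 f₀ g hgC hgmem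
  refine ⟨f, hgen.trans hf, fun i => ?_⟩
  apply luroth_step2
  have hpi : algebraMap (MvPolynomial (Fin n) K) (FractionRing (MvPolynomial (Fin n) K)) (p i) ∈
      IntermediateField.adjoin K
        (Set.range fun i => algebraMap (MvPolynomial (Fin n) K)
          (FractionRing (MvPolynomial (Fin n) K)) (p i)) :=
    IntermediateField.subset_adjoin _ _ ⟨i, rfl⟩
  rwa [hgen, hf] at hpi
end

section
/- Let K be a field and p₁,…,pₙ ∈ K[x₁,…,xₙ], not all constant. Let B be the ideal of relations of K(x₁,…,xₙ)/K(p₁,…,pₙ), i.e., the kernel of the map K(p₁,…,pₙ)[y₁,…,yₙ] → K(x₁,…,xₙ) sending yᵢ ↦ xᵢ. Then B is generated by the polynomials p̄ᵢ = pᵢ(y₁,…,yₙ) − pᵢ(x₁,…,xₙ), for i = 1,…,n. -/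
open MvPolynomial

set_option maxHeartbeats 4000000 in
set_option synthInstance.maxHeartbeats 1000000 in
/-- The ideal of relations of `K(x₁,…,xₙ)/K(p₁,…,pₙ)`, i.e. the kernel of the evaluation map
`K(p₁,…,pₙ)[y₁,…,yₙ] → K(x₁,…,xₙ)`, `yᵢ ↦ xᵢ`, is generated by the polynomials
`p̄ᵢ = pᵢ(y₁,…,yₙ) − pᵢ(x₁,…,xₙ)`. -/
theorem stmt_6 (K : Type*) [Field K] (n : ℕ)
    (p : Fin n → MvPolynomial (Fin n) K)
    (hp : ∃ i, p i ∉ Set.range (MvPolynomial.C : K → MvPolynomial (Fin n) K))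
    (ι : MvPolynomial (Fin n) K →+* FractionRing (MvPolynomial (Fin n) K))
    (hι : ι = algebraMap (MvPolynomial (Fin n) K) (FractionRing (MvPolynomial (Fin n) K)))
    (L : IntermediateField K (FractionRing (MvPolynomial (Fin n) K)))
    (hL : L = IntermediateField.adjoin K (Set.range fun i => ι (p i)))
    (hmem : ∀ i, ι (p i) ∈ L) :
    RingHom.ker (MvPolynomial.aeval (R := L) fun i => ι (MvPolynomial.X i)).toRingHom =
      Ideal.span (Set.range fun i =>
        MvPolynomial.map (algebraMap K L) (p i)
          - MvPolynomial.C (⟨ι (p i), hmem i⟩ : L)) := by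
  classical
  set F := FractionRing (MvPolynomial (Fin n) K) with hF
  set ev : MvPolynomial (Fin n) L →ₐ[L] F := MvPolynomial.aeval (R := L) fun i => ι (MvPolynomial.X i) with hev
  set w : Fin n → L := fun i => (⟨ι (p i), hmem i⟩ : L) with hw
  set I : Ideal (MvPolynomial (Fin n) L) := Ideal.span (Set.range fun i =>
        MvPolynomial.map (algebraMap K L) (p i) - MvPolynomial.C (w i)) with hI
  -- (A) evaluating a mapped K-polynomial gives ι of it
  have hA : ∀ q : MvPolynomial (Fin n) K, ev (map (algebraMap K L) q) = ι q := by
    intro q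
    rw [hev]
    show (MvPolynomial.aeval fun i => ι (MvPolynomial.X i)) (map (algebraMap K L) q) = ι q
    rw [aeval_map_algebraMap, hι]
    have h := comp_aeval_apply (R := K) (f := (X : Fin n → MvPolynomial (Fin n) K))
        (IsScalarTower.toAlgHom K (MvPolynomial (Fin n) K) F) q
    simp only [aeval_X_left_apply, IsScalarTower.coe_toAlgHom'] at h
    exact h.symm
  -- (B) evaluating a constant
  have hB : ∀ c : L, ev (MvPolynomial.C c) = (c : F) := by
    intro c
    rw [hev]
    simp [aeval_C]
    rfl
  -- (C) coe of aeval w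
  have hC : ∀ q : MvPolynomial (Fin n) K,
      ((aeval w q : L) : F) = aeval (fun i => ι (p i)) q := by
    intro q
    have h := comp_aeval_apply (R := K) (f := w) L.val q
    exact h
  -- easy inclusion
  have hle : I ≤ RingHom.ker ev.toRingHom := by
    rw [hI, Ideal.span_le]
    rintro _ ⟨i, rfl⟩
    rw [SetLike.mem_coe, RingHom.mem_ker]
    show ev (map (algebraMap K L) (p i) - MvPolynomial.C (w i)) = 0
    rw [map_sub, hA, hB]
    exact sub_self _
  -- key congruence: C (q(w)) ≡ map (q(p)) mod I
  have hkey : ∀ q : MvPolynomial (Fin n) K,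
      MvPolynomial.C (aeval w q) - map (algebraMap K L) (aeval p q) ∈ I := by
    intro q
    induction q using MvPolynomial.induction_on with
    | C a =>
        have : MvPolynomial.C (aeval w (MvPolynomial.C a))
            - map (algebraMap K L) (aeval p (MvPolynomial.C a)) = 0 := by
          simp [algebraMap_eq]
        rw [this]; exact I.zero_mem
    | add q1 q2 h1 h2 =>
        have : MvPolynomial.C (aeval w (q1 + q2)) - map (algebraMap K L) (aeval p (q1 + q2))
            = (MvPolynomial.C (aeval w q1) - map (algebraMap K L) (aeval p q1))
              + (MvPolynomial.C (aeval w q2) - map (algebraMap K L) (aeval p q2)) := by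
          rw [map_add, map_add, map_add, map_add]; ring
        rw [this]; exact I.add_mem h1 h2
    | mul_X q i h =>
        have hgen : map (algebraMap K L) (p i) - MvPolynomial.C (w i) ∈ I := by
          rw [hI]; exact Ideal.subset_span ⟨i, rfl⟩
        have : MvPolynomial.C (aeval w (q * X i)) - map (algebraMap K L) (aeval p (q * X i))
            = MvPolynomial.C (aeval w q) *
                (-(map (algebraMap K L) (p i) - MvPolynomial.C (w i)))
              + (MvPolynomial.C (aeval w q) - map (algebraMap K L) (aeval p q))
                * map (algebraMap K L) (p i) := by
          rw [map_mul, map_mul, map_mul, map_mul]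
          simp only [aeval_X]
          ring
        rw [this]
        exact I.add_mem (I.mul_mem_left _ (I.neg_mem hgen)) (I.mul_mem_right _ h)
  -- decompose elements of L as ratios
  have hdec : ∀ c : L, ∃ r s : MvPolynomial (Fin n) K,
      aeval w s ≠ 0 ∧ c * aeval w s = aeval w r := by
    intro c
    have hc : (c : F) ∈ IntermediateField.adjoin K (Set.range fun i => ι (p i)) := hL ▸ c.2
    obtain ⟨r, s, hrs⟩ := (IntermediateField.mem_adjoin_range_iff K _ _).mp hc
    by_cases hs : aeval w s = 0
    · refine ⟨0, 1, ?_, ?_⟩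
      · rw [map_one]; exact one_ne_zero
      · have hc0 : (c : F) = 0 := by
          rw [hrs, ← hC s, hs]
          simp
        have : c = 0 := Subtype.coe_injective (by simpa using hc0)
        rw [this, map_zero, zero_mul]
    · refine ⟨r, s, hs, ?_⟩
      apply Subtype.coe_injective
      have hsne : ((aeval w s : L) : F) ≠ 0 := by
        simpa using fun h => hs (Subtype.coe_injective (by simpa using h))
      push_cast
      rw [hC s, hC r, hrs, ← hC s]
      field_simp
  choose rfn sfn hs0 hcs using hdec
  -- the main argument
  refine le_antisymm ?_ hle
  intro f hf
  rw [RingHom.mem_ker] at hf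
  have hf' : ev f = 0 := hf
  set d : L := ∏ m ∈ f.support, aeval w (sfn (coeff m f)) with hd
  have hdne : d ≠ 0 := Finset.prod_ne_zero_iff.mpr fun m _ => hs0 _
  set t : (Fin n →₀ ℕ) → MvPolynomial (Fin n) K :=
    fun m => rfn (coeff m f) * ∏ m' ∈ f.support.erase m, sfn (coeff m' f) with ht'
  have ht : ∀ m ∈ f.support, aeval w (t m) = d * coeff m f := by
    intro m hm
    rw [ht']
    simp only [map_mul, map_prod]
    rw [hd, ← Finset.mul_prod_erase _ _ hm, ← hcs (coeff m f)]
    ring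
  set GK : MvPolynomial (Fin n) K :=
    ∑ m ∈ f.support, aeval p (t m) * monomial m 1 with hGKdef
  have h1 : MvPolynomial.C d * f
      = ∑ m ∈ f.support, MvPolynomial.C (aeval w (t m)) * monomial m 1 := by
    conv_lhs => rw [f.as_sum, Finset.mul_sum]
    refine Finset.sum_congr rfl fun m hm => ?_
    rw [ht m hm, C_mul_monomial, C_mul_monomial, mul_one]
  have h2 : map (algebraMap K L) GK
      = ∑ m ∈ f.support, map (algebraMap K L) (aeval p (t m)) * monomial m 1 := by
    rw [hGKdef, map_sum]
    refine Finset.sum_congr rfl fun m hm => ?_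
    rw [map_mul, map_monomial, map_one]
  have hdiff : MvPolynomial.C d * f - map (algebraMap K L) GK ∈ I := by
    rw [h1, h2, ← Finset.sum_sub_distrib]
    refine Ideal.sum_mem _ fun m hm => ?_
    rw [← sub_mul]
    exact I.mul_mem_right _ (hkey (t m))
  have h3 : ev (map (algebraMap K L) GK) = 0 := by
    have h4 : ev (MvPolynomial.C d * f - map (algebraMap K L) GK) = 0 := hle hdiff
    rw [map_sub, map_mul, hf', mul_zero, zero_sub, neg_eq_zero] at h4
    exact h4
  have hGK0 : GK = 0 := by
    apply IsFractionRing.injective (MvPolynomial (Fin n) K) F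
    rw [map_zero, ← hι, ← hA GK, h3]
  have hCdf : MvPolynomial.C d * f ∈ I := by
    have : map (algebraMap K L) GK = 0 := by rw [hGK0, map_zero]
    simpa [this] using hdiff
  have hfeq : f = MvPolynomial.C d⁻¹ * (MvPolynomial.C d * f) := by
    rw [← mul_assoc, ← C_mul, inv_mul_cancel₀ hdne, C_1, one_mul]
  rw [hfeq]
  exact I.mul_mem_left _ hCdf
end

section
/- Let G be the Galois group of an irreducible separable polynomial f over E with roots α₁,…,α_m, and let ψ = {α_{i₁},…,α_{i_k}} be a decomposition block containing α = α₁. Let β₁,…,β_k be the elementary symmetric functions in α_{i₁},…,α_{i_k}, equivalently the coefficients a₀,…,a_{k−1} of h(z) = ∏_{j=1}^{k}(z − α_{iⱼ}) = z^k + a_{k−1}z^{k−1} + ⋯ + a₀. Then the fixed field of the block stabilizer G_ψ = {σ ∈ G : σ(ψ) = ψ} equals E[β₁,…,β_k] = E[a₀,…,a_{k−1}]. -/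
open Polynomial

/-- If `ψ = {α_{i₁},…,α_{i_k}}` is a decomposition block containing `α` for the Galois group
of an irreducible separable polynomial `f`, then the fixed field of the block stabilizer
`G_ψ` equals `E` adjoined the coefficients of `h(z) = ∏_{a ∈ ψ} (z − a)`, i.e. `E` adjoined
the elementary symmetric functions of the elements of `ψ`. -/
theorem stmt_12 (E L : Type*) [Field E] [Field L] [Algebra E L]
    (f : Polynomial E) (hirr : Irreducible f) (hsep : f.Separable)
    [Polynomial.IsSplittingField E L f]
    (α : L) (ψ : Finset L)
    (hψroots : ∀ a ∈ ψ, Polynomial.aeval a f = 0) (hα : α ∈ ψ)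
    (hblock : ∀ σ : L ≃ₐ[E] L, (⇑σ '' (ψ : Set L)) = (ψ : Set L) ∨
      Disjoint (⇑σ '' (ψ : Set L)) (ψ : Set L))
    (Gψ : Subgroup (L ≃ₐ[E] L))
    (hGψ : ∀ σ : L ≃ₐ[E] L, σ ∈ Gψ ↔ ⇑σ '' (ψ : Set L) = (ψ : Set L))
    (h : Polynomial L) (hh : h = ∏ a ∈ ψ, (X - C a)) :
    IntermediateField.fixedField Gψ = IntermediateField.adjoin E (Set.range h.coeff) := by
  classical
  haveI : IsGalois E L := IsGalois.of_separable_splitting_field hsep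
  haveI : FiniteDimensional E L := Polynomial.IsSplittingField.finiteDimensional L f
  set K := IntermediateField.adjoin E (Set.range h.coeff) with hK
  -- σ ∈ Gψ fixes h
  have hmap : ∀ σ : L ≃ₐ[E] L, σ ∈ Gψ → h.map (σ : L →+* L) = h := by
    intro σ hσ
    have himg : ψ.image σ = ψ := by
      have hs := (hGψ σ).1 hσ
      ext x
      constructor
      · intro hx
        obtain ⟨a, ha, rfl⟩ := Finset.mem_image.1 hx
        have : σ a ∈ (ψ : Set L) := hs ▸ ⟨a, ha, rfl⟩
        exact_mod_cast this
      · intro hx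
        have : x ∈ ⇑σ '' (ψ : Set L) := hs.symm ▸ (by exact_mod_cast hx)
        obtain ⟨a, ha, rfl⟩ := this
        exact Finset.mem_image.2 ⟨a, ha, rfl⟩
    rw [hh, Polynomial.map_prod]
    simp only [Polynomial.map_sub, map_X, map_C]
    conv_rhs => rw [← himg]
    exact (Finset.prod_image (f := fun a => X - C a) fun a _ b _ hab => σ.injective hab).symm
  apply le_antisymm
  · -- fixedField Gψ ≤ K via fixingSubgroup K ≤ Gψ
    have hle : IntermediateField.fixingSubgroup K ≤ Gψ := by
      intro σ hσ
      have hfix : ∀ n, σ (h.coeff n) = h.coeff n := fun n =>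
        hσ ⟨h.coeff n, IntermediateField.subset_adjoin E _ ⟨n, rfl⟩⟩
      have hmapσ : h.map (σ : L →+* L) = h := by
        ext n
        rw [Polynomial.coeff_map]
        exact hfix n
      rw [hGψ]
      have hroot : ∀ x : L, h.eval x = 0 ↔ x ∈ ψ := by
        intro x
        rw [hh, Polynomial.eval_prod, Finset.prod_eq_zero_iff]
        constructor
        · rintro ⟨a, ha, hax⟩
          simp only [Polynomial.eval_sub, Polynomial.eval_X, Polynomial.eval_C,
            sub_eq_zero] at hax
          exact hax ▸ ha
        · intro hx
          exact ⟨x, hx, by simp⟩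
      have hsub : ψ.image σ ⊆ ψ := by
        intro x hx
        obtain ⟨a, ha, rfl⟩ := Finset.mem_image.1 hx
        rw [← hroot]
        have : h.eval (σ a) = (h.map (σ : L →+* L)).eval (σ a) := by rw [hmapσ]
        rw [this, Polynomial.eval_map,
          show σ a = (σ : L →+* L) a from rfl, Polynomial.eval₂_hom,
          (hroot a).2 ha, map_zero]
      have heq : ψ.image σ = ψ :=
        Finset.eq_of_subset_of_card_le hsub
          (le_of_eq (Finset.card_image_of_injective ψ σ.injective).symm)
      rw [← Finset.coe_image, heq]
    calc IntermediateField.fixedField Gψ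
        ≤ IntermediateField.fixedField (IntermediateField.fixingSubgroup K) := by
          intro x hx
          intro g
          exact hx ⟨g.1, hle g.2⟩
      _ = K := IsGalois.fixedField_fixingSubgroup K
  · -- K ≤ fixedField Gψ
    rw [hK, IntermediateField.adjoin_le_iff]
    rintro x ⟨n, rfl⟩
    intro g
    have hm := hmap g.1 g.2
    have h1 : (h.map (g.1 : L →+* L)).coeff n = h.coeff n := by rw [hm]
    rw [Polynomial.coeff_map] at h1
    exact h1
end

section
/- Let F = E[α] be a finite separable extension of E and f(α, x) ∈ F[x] an irreducible monic polynomial such that the norm N(f) ∈ E[x] is squarefree. If N(f) = h₁ ⋯ h_m is the complete factorization of N(f) into irreducibles in E[x], then f = gcd(h₁, f) ⋯ gcd(h_m, f) is the complete factorization of f into irreducibles in F[x]. -/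
open scoped Classical

lemma aux_map_not_unit {K L : Type*} [Field K] [Field L] (φ : K →+* L)
    {p : Polynomial K} (hp : ¬ IsUnit p) : ¬ IsUnit (p.map φ) := by
  intro hu
  rw [Polynomial.isUnit_iff_degree_eq_zero,
    Polynomial.degree_map_eq_of_injective φ.injective] at hu
  exact hp (Polynomial.isUnit_iff_degree_eq_zero.mpr hu)

/-- Trager: if `f ∈ F[x]` is irreducible monic with squarefree norm `N(f)`, and
`N(f) = h₁ ⋯ h_m` is the complete factorization of the norm into irreducibles in `E[x]`,
then `f = gcd(h₁, f) ⋯ gcd(h_m, f)` is the complete factorization of `f` into irreducibles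
in `F[x]`. -/
theorem stmt_15 (E F M : Type*) [Field E] [Field F] [Field M]
    [Algebra E F] [Algebra E M] [Algebra F M] [IsScalarTower E F M] [IsAlgClosed M]
    [FiniteDimensional E F] [Algebra.IsSeparable E F]
    (α : F) (hα : IntermediateField.adjoin E {α} = ⊤)
    (f : Polynomial F) (hmonic : f.Monic) (hf : Irreducible f)
    (m : ℕ) (h : Fin m → Polynomial E) (hirr : ∀ i, Irreducible (h i))
    (hnorm : ∏ σ : F →ₐ[E] M, f.map (σ : F →+* M) =
      (∏ i : Fin m, h i).map (algebraMap E M))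
    (hsqf : Squarefree (∏ i : Fin m, h i)) :
    f = ∏ i : Fin m, gcd ((h i).map (algebraMap E F)) f ∧
    ∀ i : Fin m, Irreducible (gcd ((h i).map (algebraMap E F)) f) := by
  -- Key fact: f divides the image of every h i in F[x].
  have keyA : ∀ i : Fin m, f ∣ (h i).map (algebraMap E F) := by
    intro i
    by_contra hdvd
    have hcop : IsCoprime f ((h i).map (algebraMap E F)) :=
      (hf.isCoprime_or_dvd _).resolve_right hdvd
    have hcopσ : ∀ σ : F →ₐ[E] M,
        IsCoprime (f.map (σ : F →+* M)) ((h i).map (algebraMap E M)) := by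
      intro σ
      have := hcop.map (Polynomial.mapRingHom (σ : F →+* M))
      simpa [Polynomial.coe_mapRingHom, Polynomial.map_map, σ.comp_algebraMap] using this
    have hprod : IsCoprime (∏ σ : F →ₐ[E] M, f.map (σ : F →+* M))
        ((h i).map (algebraMap E M)) :=
      IsCoprime.prod_left fun σ _ => hcopσ σ
    rw [hnorm] at hprod
    have hdvdN : (h i).map (algebraMap E M) ∣ (∏ i : Fin m, h i).map (algebraMap E M) :=
      Polynomial.map_dvd _ (Finset.dvd_prod_of_mem h (Finset.mem_univ i))
    exact aux_map_not_unit (algebraMap E M) (hirr i).not_isUnit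
      (hprod.isUnit_of_dvd' hdvdN dvd_rfl)
  -- m = 1
  have hm : m = 1 := by
    by_contra hm1
    rcases Nat.lt_or_ge m 2 with h2 | h2
    · -- m = 0
      have hm0 : m = 0 := by omega
      subst hm0
      have h1 : (∏ σ : F →ₐ[E] M, f.map (σ : F →+* M)) = 1 := by
        simpa using hnorm
      have : f.map ((IsScalarTower.toAlgHom E F M : F →ₐ[E] M) : F →+* M) ∣ 1 := by
        rw [← h1]
        exact Finset.dvd_prod_of_mem _ (Finset.mem_univ _)
      exact aux_map_not_unit _ hf.not_isUnit (isUnit_of_dvd_one this)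
    · -- m ≥ 2
      have i0 : Fin m := ⟨0, by omega⟩
      have i1 : Fin m := ⟨1, by omega⟩
      have hne : (⟨0, by omega⟩ : Fin m) ≠ ⟨1, by omega⟩ := by
        simp [Fin.ext_iff]
      set j0 : Fin m := ⟨0, by omega⟩
      set j1 : Fin m := ⟨1, by omega⟩
      have hd01 : h j0 ∣ h j1 := by
        rw [(hirr j0).dvd_iff_not_isCoprime]
        intro hcop
        have hcopF := hcop.map (Polynomial.mapRingHom (algebraMap E F))
        simp only [Polynomial.coe_mapRingHom] at hcopF
        exact hf.not_isUnit (hcopF.isUnit_of_dvd' (keyA j0) (keyA j1))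
      have hsq : h j0 * h j0 ∣ ∏ i : Fin m, h i := by
        have hsub : ({j0, j1} : Finset (Fin m)) ⊆ Finset.univ := Finset.subset_univ _
        have hp2 : h j0 * h j1 ∣ ∏ i : Fin m, h i := by
          have := Finset.prod_dvd_prod_of_subset ({j0, j1} : Finset (Fin m)) Finset.univ h hsub
          rwa [Finset.prod_pair hne] at this
        exact dvd_trans (mul_dvd_mul_left (h j0) hd01) hp2
      exact (hirr j0).not_isUnit (hsqf _ hsq)
  subst hm
  have hdvd := keyA 0
  set a := (h 0).map (algebraMap E F) with ha
  have hgf : gcd a f ∣ f := gcd_dvd_right a f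
  have hfg : f ∣ gcd a f := dvd_gcd hdvd dvd_rfl
  have heq : f = gcd a f := by
    calc f = normalize f := (hmonic.normalize_eq_self).symm
    _ = normalize (gcd a f) := normalize_eq_normalize hfg hgf
    _ = gcd a f := normalize_gcd a f
  constructor
  · rw [Fin.prod_univ_one]
    exact heq
  · intro i
    have : i = 0 := Subsingleton.elim i 0
    subst this
    rw [← heq]
    exact hf
end
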